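/- arXiv:2507.06772 — 8 statements merged into one kernel-verified Lean document; each statement's English description precedes it below -/
import Mathlib

section
/- Let s ≥ 1 be an integer and let δ ∈ (0, 0.4931). Then there exists a constant c₁ > 0, depending only on δ, with the following property: for all p, n ≥ 1 and every matrix A ∈ ℝ^{p×n} whose 2s-RIP constant is at most δ, every s-sparse vector x̂ ∈ ℝⁿ, every ξ ≥ 0, every z ∈ ℝ^p with ‖z‖ ≤ ξ, and y = A x̂ + z, every minimizer x* of ‖x‖₁ over the set {x ∈ ℝⁿ : ‖Ax − y‖ ≤ ξ} satisfies ‖x* − x̂‖ ≤ c₁ ξ. -/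
open Filter Matrix MeasureTheory

/-- The map `x ↦ A x` from `ℝⁿ` to `ℝᵖ` with the Euclidean (`ℓ²`) structure. -/
noncomputable def mulVecE {p n : ℕ} (A : Matrix (Fin p) (Fin n) ℝ)
    (x : EuclideanSpace ℝ (Fin n)) : EuclideanSpace ℝ (Fin p) :=
  (WithLp.equiv 2 (Fin p → ℝ)).symm (A.mulVec ((WithLp.equiv 2 (Fin n → ℝ)) x))

/-- The `ℓ¹` norm on `ℝⁿ`. -/
noncomputable def oneNorm {n : ℕ} (x : EuclideanSpace ℝ (Fin n)) : ℝ :=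
  ∑ i, |x i|

/-- `x` is `s`-sparse: it has at most `s` nonzero entries. -/
def IsSparse {n : ℕ} (s : ℕ) (x : EuclideanSpace ℝ (Fin n)) : Prop :=
  (Finset.univ.filter fun i => x i ≠ 0).card ≤ s

/-!
Put `h = xstar - xhat`. As `xhat` is feasible, `‖xstar‖₁ ≤ ‖xhat‖₁`, which puts `h` in the cone
`‖h_Sᶜ‖₁ ≤ ‖h_S‖₁` over the support `S` of `xhat`; moreover `‖A h‖ ≤ 2ξ`. Split `h = t + w`, where
`t` keeps the `s` largest entries of `h` (on `T`), and let `α = ‖t‖₁ / s`. Then `w` vanishes on `T`,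
has entries at most `α` and `‖w‖₁ ≤ s α`, so by Cai–Zhang's sparse representation of polytopes
(here derived from Krein–Milman) it is a limit of convex combinations of `s`-sparse vectors `u` with
the same constraints. Each such `u` has `‖u‖ ≤ ‖t‖` and is orthogonal to `t`, so polarization and
the `2s`-RIP give `⟪A t, A u⟫ ≥ -δ ‖t‖²`, hence `⟪A t, A w⟫ ≥ -δ ‖t‖²`. Now
`(1 - δ) ‖t‖² ≤ ‖A t‖² = ⟪A t, A h⟫ - ⟪A t, A w⟫ ≤ 4ξ ‖t‖ + δ ‖t‖²` and `‖h‖ ≤ 2 ‖t‖`, which gives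
`c₁ = 8 / (1 - 2δ)`.
-/

open Finset
open scoped RealInnerProductSpace

theorem EuclideanSpace.norm_le_sum_abs {ι : Type*} [Fintype ι] (v : EuclideanSpace ℝ ι) :
    ‖v‖ ≤ ∑ i, |v i| := by
  refine (pow_le_pow_iff_left₀ (norm_nonneg v) (sum_nonneg fun i _ => abs_nonneg _)
    two_ne_zero).1 ?_
  simpa [EuclideanSpace.real_norm_sq_eq] using
    sum_sq_le_sq_sum_of_nonneg (s := univ) fun i _ => abs_nonneg (v i)

theorem abs_add_mul_sign {x c : ℝ} (hc : |c| ≤ |x|) : |x + c * Real.sign x| = |x| + c := by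
  rcases lt_trichotomy x 0 with hx | rfl | hx
  · rw [abs_le, abs_of_neg hx] at hc
    simp only [Real.sign_of_neg hx, abs_of_neg hx, mul_neg_one]
    rw [abs_of_nonpos (by linarith)]
    ring
  · simp_all
  · rw [abs_le, abs_of_pos hx] at hc
    simp only [Real.sign_of_pos hx, abs_of_pos hx, mul_one]
    exact abs_of_nonneg (by linarith)

section CappedL1Ball

variable {ι : Type*} [Fintype ι]

def cappedL1Ball (Z : Set ι) (s : ℕ) (α : ℝ) : Set (EuclideanSpace ℝ ι) :=
  {v | (∀ i ∈ Z, v i = 0) ∧ (∀ i, |v i| ≤ α) ∧ ∑ i, |v i| ≤ s * α}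

def cappedSparseVectors (Z : Set ι) (s : ℕ) (α : ℝ) : Set (EuclideanSpace ℝ ι) :=
  {u | (∀ i ∈ Z, u i = 0) ∧ (∀ i, |u i| ≤ α) ∧ #{i | u i ≠ 0} ≤ s}

variable {Z : Set ι} {s : ℕ} {α : ℝ}

theorem convex_cappedL1Ball : Convex ℝ (cappedL1Ball Z s α) := by
  rintro v ⟨hvZ, hv, hv₁⟩ u ⟨huZ, hu, hu₁⟩ a b ha hb hab
  have habs : ∀ i, |(a • v + b • u) i| ≤ a * |v i| + b * |u i| := fun i => by
    simpa [abs_mul, abs_of_nonneg ha, abs_of_nonneg hb] using abs_add_le (a * v i) (b * u i)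
  refine ⟨fun i hi => by simp [hvZ i hi, huZ i hi], fun i => ?_, ?_⟩
  · calc |(a • v + b • u) i| ≤ a * |v i| + b * |u i| := habs i
      _ ≤ a * α + b * α := by gcongr <;> apply_assumption
      _ = α := by rw [← add_mul, hab, one_mul]
  · calc ∑ i, |(a • v + b • u) i| ≤ ∑ i, (a * |v i| + b * |u i|) := sum_le_sum fun i _ => habs i
      _ = a * ∑ i, |v i| + b * ∑ i, |u i| := by rw [sum_add_distrib, mul_sum, mul_sum]
      _ ≤ a * (s * α) + b * (s * α) := by gcongr
      _ = s * α := by rw [← add_mul, hab, one_mul]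

theorem isCompact_cappedL1Ball : IsCompact (cappedL1Ball Z s α) := by
  have hcoord : ∀ i, Continuous fun v : EuclideanSpace ℝ ι => v i := fun i =>
    (EuclideanSpace.proj i).continuous
  refine Metric.isCompact_of_isClosed_isBounded ?_ ?_
  · simp only [cappedL1Ball, Set.ofPred_and, Set.ofPred_forall]
    exact (isClosed_biInter fun i _ => isClosed_eq (hcoord i) continuous_const).inter
      ((isClosed_iInter fun i => isClosed_le (hcoord i).abs continuous_const).inter
      (isClosed_le (continuous_finsetSum _ fun i _ => (hcoord i).abs) continuous_const))
  · exact isBounded_iff_forall_norm_le.2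
      ⟨s * α, fun v ⟨_, _, hv₁⟩ => (EuclideanSpace.norm_le_sum_abs v).trans hv₁⟩

/-- Both perturbations `v ± (cᵢ · sign vᵢ)ᵢ` stay in the ball. -/
theorem eq_zero_of_mem_extremePoints_cappedL1Ball {v : EuclideanSpace ℝ ι}
    (hv : v ∈ (cappedL1Ball Z s α).extremePoints ℝ) {c : ι → ℝ}
    (hc : ∀ i, |c i| ≤ |v i| ∧ |c i| ≤ α - |v i|) (hsum : ∑ i, c i = 0) : c = 0 := by
  have hshift : ∀ e : ι → ℝ, (∀ i, |e i| ≤ |v i| ∧ |e i| ≤ α - |v i|) → ∑ i, e i = 0 →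
      v + WithLp.toLp 2 (fun i => e i * Real.sign (v i)) ∈ cappedL1Ball Z s α := by
    intro e he hesum
    obtain ⟨hvZ, -, hv₁⟩ := hv.1
    have habs : ∀ i, |v i + e i * Real.sign (v i)| = |v i| + e i := fun i =>
      abs_add_mul_sign (he i).1
    refine ⟨fun i hi => ?_, fun i => ?_, ?_⟩
    · have : e i = 0 := abs_nonpos_iff.1 (by simpa [hvZ i hi] using (he i).1)
      simp [hvZ i hi, this]
    · simp only [PiLp.add_apply, habs]
      linarith [le_abs_self (e i), (he i).2]
    · simp only [PiLp.add_apply, habs, sum_add_distrib, hesum, add_zero, hv₁]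
  have hneg : ∀ i, |(-c) i| ≤ |v i| ∧ |(-c) i| ≤ α - |v i| := by simpa using hc
  have hsub : v - WithLp.toLp 2 (fun i => c i * Real.sign (v i)) =
      v + WithLp.toLp 2 (fun i => (-c) i * Real.sign (v i)) := by
    ext i; simp [sub_eq_add_neg]
  have hd := hv.2 (hshift c hc hsum)
    (hsub ▸ hshift (-c) hneg (by simpa using hsum)) (mem_openSegment_add_sub v _)
  ext i
  have := congrArg (· i) (add_eq_left.1 hd)
  simp only [PiLp.zero_apply, mul_eq_zero, Real.sign_eq_zero_iff] at this
  rcases this with h | h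
  · exact h
  · simpa [h] using (hc i).1

theorem card_fractional_le_one_of_mem_extremePoints [DecidableEq ι] {v : EuclideanSpace ℝ ι}
    (hv : v ∈ (cappedL1Ball Z s α).extremePoints ℝ) : #{i | 0 < |v i| ∧ |v i| < α} ≤ 1 := by
  refine card_le_one.2 fun i hi j hj => by_contra fun hij => ?_
  simp only [mem_filter, mem_univ, true_and] at hi hj
  set ε := min (min |v i| (α - |v i|)) (min |v j| (α - |v j|))
  have hε : 0 < ε := lt_min (lt_min hi.1 (by linarith)) (lt_min hj.1 (by linarith))
  have hc := eq_zero_of_mem_extremePoints_cappedL1Ball hv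
    (c := Pi.single i ε - Pi.single j ε) (fun k => ?_) (by simp [sum_sub_distrib])
  · simpa [Pi.single_apply, hij, hε.ne'] using congrFun hc i
  · rcases eq_or_ne k i with rfl | hki
    · simp only [Pi.sub_apply, Pi.single_eq_same, Pi.single_eq_of_ne hij, sub_zero, abs_of_pos hε]
      exact ⟨(min_le_left _ _).trans (min_le_left _ _), (min_le_left _ _).trans (min_le_right _ _)⟩
    rcases eq_or_ne k j with rfl | hkj
    · simp only [Pi.sub_apply, Pi.single_eq_same, Pi.single_eq_of_ne hki, zero_sub, abs_neg,
        abs_of_pos hε]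
      exact ⟨(min_le_right _ _).trans (min_le_left _ _),
        (min_le_right _ _).trans (min_le_right _ _)⟩
    · simp [Pi.single_eq_of_ne hki, Pi.single_eq_of_ne hkj, hv.1.2.1 k]

theorem extremePoints_cappedL1Ball_subset :
    (cappedL1Ball Z s α).extremePoints ℝ ⊆ cappedSparseVectors Z s α := by
  classical
  intro v hv
  obtain ⟨hvZ, hvα, hv₁⟩ := hv.1
  refine ⟨hvZ, hvα, ?_⟩
  set N : Finset ι := {i | v i ≠ 0}
  obtain hN | ⟨i₀, hi₀⟩ := N.eq_empty_or_nonempty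
  · simp [hN]
  have hα : 0 < α := (abs_pos.2 (mem_filter.1 hi₀).2).trans_le (hvα i₀)
  set F : Finset ι := {i | 0 < |v i| ∧ |v i| < α}
  -- an extreme point has at most one entry strictly between `0` and `α` in absolute value
  have hdeficit : ∑ i ∈ N, (α - |v i|) < α := by
    have hNF : ∑ i ∈ F, (α - |v i|) = ∑ i ∈ N, (α - |v i|) := by
      refine sum_subset (fun i hi => ?_) fun i hiN hiF => ?_
      · simp only [F, N, mem_filter, mem_univ, true_and] at hi ⊢
        exact abs_pos.1 hi.1
      · simp only [F, N, mem_filter, mem_univ, true_and, not_and, not_lt] at hiN hiF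
        linarith [hiF (abs_pos.2 hiN), hvα i]
    rw [← hNF]
    obtain hF | ⟨j, hj⟩ := F.eq_empty_or_nonempty
    · simpa [hF]
    · have hFj : F = {j} := eq_singleton_iff_unique_mem.2 ⟨hj, fun k hk =>
        card_le_one.1 (card_fractional_le_one_of_mem_extremePoints hv) k hk j hj⟩
      simp only [F, mem_filter, mem_univ, true_and] at hj
      simpa [hFj] using hj.1
  have hsumN : ∑ i ∈ N, |v i| = ∑ i, |v i| :=
    sum_filter_of_ne fun i _ h => by simpa using h
  have hcard : (#N : ℝ) * α < (s + 1) * α := by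
    calc (#N : ℝ) * α = ∑ i ∈ N, |v i| + ∑ i ∈ N, (α - |v i|) := by
          rw [← sum_add_distrib]; simp
      _ < s * α + α := by rw [hsumN]; exact add_lt_add_of_le_of_lt hv₁ hdeficit
      _ = (s + 1) * α := by ring
  exact Nat.lt_succ_iff.1 (by exact_mod_cast lt_of_mul_lt_mul_right hcard hα.le)

/-- Cai–Zhang's sparse representation of a polytope. -/
theorem cappedL1Ball_subset_closure_convexHull :
    cappedL1Ball Z s α ⊆ closure (convexHull ℝ (cappedSparseVectors Z s α)) := by
  calc cappedL1Ball Z s α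
      = closure (convexHull ℝ ((cappedL1Ball Z s α).extremePoints ℝ)) :=
        (closure_convexHull_extremePoints isCompact_cappedL1Ball convex_cappedL1Ball).symm
    _ ⊆ closure (convexHull ℝ (cappedSparseVectors Z s α)) :=
        closure_mono (convexHull_mono extremePoints_cappedL1Ball_subset)

theorem cappedSparseVectors_subset_cappedL1Ball (hα : 0 ≤ α) :
    cappedSparseVectors Z s α ⊆ cappedL1Ball Z s α := by
  rintro u ⟨huZ, huα, hus⟩
  refine ⟨huZ, huα, ?_⟩
  calc ∑ i, |u i| = ∑ i with u i ≠ 0, |u i| := (sum_filter_of_ne fun i _ h => by simpa using h).symm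
    _ ≤ ∑ i with u i ≠ 0, α := sum_le_sum fun i _ => huα i
    _ = #{i | u i ≠ 0} * α := by rw [sum_const, nsmul_eq_mul]
    _ ≤ s * α := by gcongr

theorem norm_sq_le_of_mem_cappedL1Ball (hα : 0 ≤ α) {v : EuclideanSpace ℝ ι}
    (hv : v ∈ cappedL1Ball Z s α) : ‖v‖ ^ 2 ≤ s * α ^ 2 := by
  obtain ⟨-, hvα, hv₁⟩ := hv
  calc ‖v‖ ^ 2 = ∑ i, |v i| * |v i| := by
        simp_rw [EuclideanSpace.real_norm_sq_eq, abs_mul_abs_self, sq]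
    _ ≤ ∑ i, α * |v i| := sum_le_sum fun i _ => by gcongr; exact hvα i
    _ = α * ∑ i, |v i| := (mul_sum _ _ _).symm
    _ ≤ α * (s * α) := by gcongr
    _ = s * α ^ 2 := by ring

end CappedL1Ball

section Restrict

variable {ι : Type*} [DecidableEq ι]

def restrictTo (T : Finset ι) (x : EuclideanSpace ℝ ι) : EuclideanSpace ℝ ι :=
  WithLp.toLp 2 fun i => if i ∈ T then x i else 0

variable (T : Finset ι) (x : EuclideanSpace ℝ ι)

@[simp]
theorem restrictTo_apply (i : ι) : restrictTo T x i = if i ∈ T then x i else 0 := rfl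

variable [Fintype ι]

theorem restrictTo_add_restrictTo_compl : restrictTo T x + restrictTo Tᶜ x = x := by
  ext i
  by_cases hi : i ∈ T <;> simp [hi]

theorem sum_abs_restrictTo : ∑ i, |restrictTo T x i| = ∑ i ∈ T, |x i| := by
  simp [apply_ite, sum_ite_mem]

theorem norm_sq_restrictTo : ‖restrictTo T x‖ ^ 2 = ∑ i ∈ T, x i ^ 2 := by
  simp [EuclideanSpace.real_norm_sq_eq, ite_pow, sum_ite_mem]

theorem card_support_restrictTo_le : #{i | restrictTo T x i ≠ 0} ≤ #T :=
  card_le_card fun i hi => by by_contra h; simp [h] at hi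

end Restrict

section EntrySums

variable {ι : Type*} [Fintype ι]

theorem exists_heaviest_finset_card_le (f : ι → ℝ) (hf : ∀ i, 0 ≤ f i) (s : ℕ) :
    ∃ T : Finset ι, #T ≤ s ∧ (∀ S : Finset ι, #S ≤ s → ∑ i ∈ S, f i ≤ ∑ i ∈ T, f i) ∧
      ∀ j ∉ T, s * f j ≤ ∑ i ∈ T, f i := by
  classical
  obtain ⟨T, hT, hmax⟩ := ((univ : Finset (Finset ι)).filter (#· ≤ s)).exists_max_image
    (∑ i ∈ ·, f i) ⟨∅, by simp⟩
  simp only [mem_filter, mem_univ, true_and] at hT hmax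
  refine ⟨T, hT, hmax, fun j hj => ?_⟩
  rcases hT.lt_or_eq with hlt | rfl
  · have hj0 : f j ≤ 0 := by
      have := hmax (insert j T) (by rw [card_insert_of_notMem hj]; omega)
      rw [sum_insert hj] at this
      linarith
    nlinarith [sum_nonneg fun i (_ : i ∈ T) => hf i, (s.cast_nonneg : (0 : ℝ) ≤ s)]
  · have hswap : ∀ i ∈ T, f j ≤ f i := fun i hi => by
      have := hmax (insert j (T.erase i)) (by
        rw [card_insert_of_notMem (by simp [hj]), card_erase_of_mem hi]
        have := card_pos.2 ⟨i, hi⟩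
        omega)
      rw [sum_insert (by simp [hj]), ← add_sum_erase T f hi] at this
      linarith
    calc (#T : ℝ) * f j = ∑ _i ∈ T, f j := by rw [sum_const, nsmul_eq_mul]
      _ ≤ ∑ i ∈ T, f i := sum_le_sum hswap

theorem sum_compl_abs_sub_le_of_sum_abs_le [DecidableEq ι] {x y : ι → ℝ} {S : Finset ι}
    (hx : ∀ i ∉ S, x i = 0) (hle : ∑ i, |y i| ≤ ∑ i, |x i|) :
    ∑ i ∈ Sᶜ, |y i - x i| ≤ ∑ i ∈ S, |y i - x i| := by
  have hS : ∑ i ∈ S, |x i| - ∑ i ∈ S, |y i - x i| ≤ ∑ i ∈ S, |y i| := by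
    rw [← sum_sub_distrib]
    exact sum_le_sum fun i _ => by
      linarith [abs_sub_abs_le_abs_sub (x i) (y i), abs_sub_comm (x i) (y i)]
  have hSc : ∑ i ∈ Sᶜ, |y i - x i| = ∑ i ∈ Sᶜ, |y i| :=
    sum_congr rfl fun i hi => by rw [hx i (mem_compl.1 hi), sub_zero]
  have hxSc : ∑ i ∈ Sᶜ, |x i| = 0 := sum_eq_zero fun i hi => by simp [hx i (mem_compl.1 hi)]
  linarith [sum_add_sum_compl S fun i => |x i|, sum_add_sum_compl S fun i => |y i|]

end EntrySums

theorem mul_norm_add_le_of_inner_ge {E F : Type*} [NormedAddCommGroup E] [InnerProductSpace ℝ E]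
    [NormedAddCommGroup F] [InnerProductSpace ℝ F] (L : E →ₗ[ℝ] F) {t w : E} {δ η : ℝ}
    (hδ : 2 * δ ≤ 1) (hlow : (1 - δ) * ‖t‖ ^ 2 ≤ ‖L t‖ ^ 2) (hup : ‖L t‖ ^ 2 ≤ (1 + δ) * ‖t‖ ^ 2)
    (hinner : -δ * ‖t‖ ^ 2 ≤ ⟪L t, L w⟫) (hwt : ‖w‖ ≤ ‖t‖) (hη : ‖L (t + w)‖ ≤ η) :
    (1 - 2 * δ) * ‖t + w‖ ≤ 4 * η := by
  have hLt : ‖L t‖ ≤ 2 * ‖t‖ := by nlinarith [norm_nonneg (L t), norm_nonneg t]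
  have hsq : ‖L t‖ ^ 2 ≤ ‖L t‖ * η + δ * ‖t‖ ^ 2 := by
    have : ⟪L t, L (t + w)⟫ ≤ ‖L t‖ * η :=
      (real_inner_le_norm _ _).trans (mul_le_mul_of_nonneg_left hη (norm_nonneg _))
    rw [map_add, inner_add_right, real_inner_self_eq_norm_sq] at this
    linarith
  have hη₀ : 0 ≤ η := (norm_nonneg _).trans hη
  have ht : (1 - 2 * δ) * ‖t‖ ≤ 2 * η := by
    rcases (norm_nonneg t).eq_or_lt with h0 | hpos
    · rw [← h0]; linarith
    · refine le_of_mul_le_mul_right ?_ hpos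
      nlinarith [mul_le_mul_of_nonneg_right hLt hη₀]
  calc (1 - 2 * δ) * ‖t + w‖ ≤ (1 - 2 * δ) * (2 * ‖t‖) :=
        mul_le_mul_of_nonneg_left ((norm_add_le t w).trans (by linarith)) (by linarith)
    _ ≤ 4 * η := by linarith

section RIP

variable {p n : ℕ}

def SatisfiesRIP (A : Matrix (Fin p) (Fin n) ℝ) (k : ℕ) (δ : ℝ) : Prop :=
  ∀ x : EuclideanSpace ℝ (Fin n), IsSparse k x →
    (1 - δ) * ‖x‖ ^ 2 ≤ ‖mulVecE A x‖ ^ 2 ∧ ‖mulVecE A x‖ ^ 2 ≤ (1 + δ) * ‖x‖ ^ 2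

theorem mulVecE_eq_toEuclideanLin (A : Matrix (Fin p) (Fin n) ℝ) :
    mulVecE A = Matrix.toEuclideanLin A := rfl

theorem IsSparse.mono {k l : ℕ} {x : EuclideanSpace ℝ (Fin n)} (hx : IsSparse k x) (hkl : k ≤ l) :
    IsSparse l x :=
  hx.trans hkl

theorem IsSparse.add {k l : ℕ} {x y : EuclideanSpace ℝ (Fin n)} (hx : IsSparse k x)
    (hy : IsSparse l y) : IsSparse (k + l) (x + y) := by
  refine (card_le_card fun i hi => ?_).trans ((card_union_le _ _).trans (add_le_add hx hy))
  simp only [mem_filter, mem_univ, true_and, mem_union] at hi ⊢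
  by_contra! h
  exact hi (by simp [h.1, h.2])

theorem IsSparse.neg {k : ℕ} {x : EuclideanSpace ℝ (Fin n)} (hx : IsSparse k x) :
    IsSparse k (-x) := by
  simpa [IsSparse] using hx

theorem IsSparse.sub {k l : ℕ} {x y : EuclideanSpace ℝ (Fin n)} (hx : IsSparse k x)
    (hy : IsSparse l y) : IsSparse (k + l) (x - y) :=
  sub_eq_add_neg x y ▸ hx.add hy.neg

variable {A : Matrix (Fin p) (Fin n) ℝ} {s : ℕ} {δ : ℝ}

theorem neg_mul_sq_le_inner_of_satisfiesRIP (hA : SatisfiesRIP A (2 * s) δ) (hδ : 0 ≤ δ)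
    {t u : EuclideanSpace ℝ (Fin n)} (ht : IsSparse s t) (hu : IsSparse s u) (htu : ⟪t, u⟫ = 0)
    (hut : ‖u‖ ≤ ‖t‖) : -δ * ‖t‖ ^ 2 ≤ ⟪mulVecE A t, mulVecE A u⟫ := by
  have hadd := (hA (t + u) (two_mul s ▸ ht.add hu)).1
  have hsub := (hA (t - u) (two_mul s ▸ ht.sub hu)).2
  simp only [mulVecE_eq_toEuclideanLin, map_add, map_sub] at hadd hsub ⊢
  rw [norm_add_sq_real, norm_add_sq_real, htu] at hadd
  rw [norm_sub_sq_real, norm_sub_sq_real, htu] at hsub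
  nlinarith [mul_le_mul hut hut (norm_nonneg u) (norm_nonneg t)]

theorem neg_mul_sq_le_inner_of_mem_cappedL1Ball (hA : SatisfiesRIP A (2 * s) δ) (hδ : 0 ≤ δ)
    {T : Finset (Fin n)} {α : ℝ} (hα : 0 ≤ α) {t w : EuclideanSpace ℝ (Fin n)}
    (ht : IsSparse s t) (htT : ∀ i ∉ T, t i = 0) (htα : s * α ^ 2 ≤ ‖t‖ ^ 2)
    (hw : w ∈ cappedL1Ball (↑T) s α) : -δ * ‖t‖ ^ 2 ≤ ⟪mulVecE A t, mulVecE A w⟫ := by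
  set f : EuclideanSpace ℝ (Fin n) →ₗ[ℝ] ℝ :=
    (innerₛₗ ℝ (mulVecE A t)).comp (Matrix.toEuclideanLin A)
  have hsparse : cappedSparseVectors (↑T) s α ⊆ {w | -δ * ‖t‖ ^ 2 ≤ f w} := fun u hu => by
    refine neg_mul_sq_le_inner_of_satisfiesRIP hA hδ ht hu.2.2 ?_ ?_
    · refine sum_eq_zero fun i _ => ?_
      by_cases hi : i ∈ T <;> simp [hi, htT, hu.1]
    · have hu₂ := norm_sq_le_of_mem_cappedL1Ball hα (cappedSparseVectors_subset_cappedL1Ball hα hu)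
      exact (pow_le_pow_iff_left₀ (norm_nonneg _) (norm_nonneg _) two_ne_zero).1 (hu₂.trans htα)
  exact closure_minimal (convexHull_min hsparse (convex_halfSpace_ge f.isLinear _))
    (isClosed_le continuous_const f.continuous_of_finiteDimensional)
    (cappedL1Ball_subset_closure_convexHull hw)

theorem mul_norm_le_of_satisfiesRIP_of_cone (hA : SatisfiesRIP A (2 * s) δ) (hs : 1 ≤ s)
    (hδ₀ : 0 ≤ δ) (hδ : 2 * δ ≤ 1) {h : EuclideanSpace ℝ (Fin n)} {S : Finset (Fin n)}
    (hS : #S ≤ s) (hcone : ∑ i ∈ Sᶜ, |h i| ≤ ∑ i ∈ S, |h i|) {η : ℝ}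
    (hη : ‖mulVecE A h‖ ≤ η) : (1 - 2 * δ) * ‖h‖ ≤ 4 * η := by
  obtain ⟨T, hT, hTmax, hTheavy⟩ := exists_heaviest_finset_card_le (fun i => |h i|)
    (fun i => abs_nonneg _) s
  have hs₀ : (0 : ℝ) < s := by exact_mod_cast hs
  set α := (∑ i ∈ T, |h i|) / s
  have hsα : s * α = ∑ i ∈ T, |h i| := mul_div_cancel₀ _ hs₀.ne'
  have hα : 0 ≤ α := by positivity
  set t := restrictTo T h
  set w := restrictTo Tᶜ h
  have ht : IsSparse s t := (card_support_restrictTo_le T h).trans hT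
  have hw : w ∈ cappedL1Ball (↑T) s α := by
    refine ⟨fun i hi => by simp [w, Finset.mem_coe.1 hi], fun i => ?_, ?_⟩
    · by_cases hi : i ∈ T
      · simpa [w, hi] using hα
      · show |restrictTo Tᶜ h i| ≤ α
        rw [restrictTo_apply, if_pos (mem_compl.2 hi)]
        exact le_of_mul_le_mul_left (hsα ▸ hTheavy i hi) hs₀
    · rw [sum_abs_restrictTo, hsα]
      linarith [hTmax S hS, sum_add_sum_compl S fun i => |h i|, sum_add_sum_compl T fun i => |h i|]
  have htα : s * α ^ 2 ≤ ‖t‖ ^ 2 := by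
    have hcs : (s * α) ^ 2 ≤ #T * ‖t‖ ^ 2 := by
      rw [hsα, norm_sq_restrictTo]
      simpa only [sq_abs] using sq_sum_le_card_mul_sum_sq (s := T) (f := fun i => |h i|)
    have : (s : ℝ) * (s * α ^ 2) ≤ s * ‖t‖ ^ 2 := by
      nlinarith [(Nat.cast_le (α := ℝ)).2 hT, sq_nonneg ‖t‖]
    exact le_of_mul_le_mul_left this hs₀
  have hwt : ‖w‖ ≤ ‖t‖ := (pow_le_pow_iff_left₀ (norm_nonneg _) (norm_nonneg _) two_ne_zero).1 <|
    (norm_sq_le_of_mem_cappedL1Ball hα hw).trans htα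
  have hinner := neg_mul_sq_le_inner_of_mem_cappedL1Ball hA hδ₀ hα ht
    (fun i hi => by simp [t, hi]) htα hw
  obtain ⟨hlow, hup⟩ := hA t (ht.mono (by omega))
  rw [← restrictTo_add_restrictTo_compl T h] at hη ⊢
  exact mul_norm_add_le_of_inner_ge (Matrix.toEuclideanLin A) hδ hlow hup hinner hwt hη

end RIP

/-- Noisy sparse recovery by `ℓ¹` minimization under the RIP
(Theorem 2, after Mo–Li): if the `2s`-RIP constant of `A` is at most
`δ < 0.4931`, then any `ℓ¹` minimizer over the feasible set recovers an
`s`-sparse vector up to `c₁ ξ`, where `c₁` depends only on `δ`. -/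
theorem sparse_recovery_l1 (s : ℕ) (hs : 1 ≤ s) (δ : ℝ)
    (hδ : δ ∈ Set.Ioo (0 : ℝ) 0.4931) :
    ∃ c₁ : ℝ, 0 < c₁ ∧
      ∀ (p n : ℕ), 1 ≤ p → 1 ≤ n →
        ∀ A : Matrix (Fin p) (Fin n) ℝ,
          -- the `2s`-RIP constant of `A` is at most `δ`
          (∀ x : EuclideanSpace ℝ (Fin n), IsSparse (2 * s) x →
            (1 - δ) * ‖x‖ ^ 2 ≤ ‖mulVecE A x‖ ^ 2 ∧
              ‖mulVecE A x‖ ^ 2 ≤ (1 + δ) * ‖x‖ ^ 2) →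
        ∀ xhat : EuclideanSpace ℝ (Fin n), IsSparse s xhat →
        ∀ ξ : ℝ, 0 ≤ ξ →
        ∀ z : EuclideanSpace ℝ (Fin p), ‖z‖ ≤ ξ →
        ∀ y : EuclideanSpace ℝ (Fin p), y = mulVecE A xhat + z →
        ∀ xstar : EuclideanSpace ℝ (Fin n),
          -- `xstar` is a minimizer of the `ℓ¹` norm over the feasible set
          ‖mulVecE A xstar - y‖ ≤ ξ →
          (∀ x : EuclideanSpace ℝ (Fin n), ‖mulVecE A x - y‖ ≤ ξ →
            oneNorm xstar ≤ oneNorm x) →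
          ‖xstar - xhat‖ ≤ c₁ * ξ := by
  obtain ⟨hδ₀, hδ₁⟩ := hδ
  have hgap : 0 < 1 - 2 * δ := by norm_num at hδ₁; linarith
  refine ⟨8 / (1 - 2 * δ), by positivity, fun p n _ _ A hA xhat hxhat ξ _ z hz y hy xstar
    hfeas hmin => ?_⟩
  have hη : ‖mulVecE A (xstar - xhat)‖ ≤ 2 * ξ := by
    rw [mulVecE_eq_toEuclideanLin, map_sub, ← mulVecE_eq_toEuclideanLin,
      show mulVecE A xstar - mulVecE A xhat = (mulVecE A xstar - y) + z by rw [hy]; abel]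
    linarith [norm_add_le (mulVecE A xstar - y) z]
  have hxhat_feas : ‖mulVecE A xhat - y‖ ≤ ξ := by rwa [hy, sub_add_cancel_left, norm_neg]
  have hcone := sum_compl_abs_sub_le_of_sum_abs_le (S := {i | xhat i ≠ 0})
    (fun i hi => by simpa using hi) (hmin xhat hxhat_feas)
  have hbound := mul_norm_le_of_satisfiesRIP_of_cone hA hs hδ₀.le (by linarith) hxhat
    (h := xstar - xhat) (by simpa using hcone) hη
  rw [div_mul_eq_mul_div, le_div_iff₀ hgap]
  linarith
end

section
/- Let f : ℝⁿ → ℝ be differentiable with ∇f Lipschitz continuous with constant κ_lg > 0, i.e., ‖∇f(y) − ∇f(z)‖ ≤ κ_lg‖y − z‖ for all y, z ∈ ℝⁿ. Let x ∈ ℝⁿ, σ > 0, and let v¹, …, v^p ∈ ℝⁿ satisfy ‖vʲ‖ ≤ κ_bv for all j = 1, …, p. Let A ∈ ℝ^{p×n} be the matrix whose j-th row is (vʲ)ᵀ, and let y ∈ ℝ^p have entries yʲ = f(x + σvʲ) − f(x). Then ‖A∇f(x) − σ⁻¹y‖ ≤ (√p/2) κ_lg κ_bv² σ. -/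
open Filter Matrix MeasureTheory

/-!
The `j`-th coordinate of the residual is `⟪∇f(x), vʲ⟫ - σ⁻¹ (f(x + σ vʲ) - f(x))`, the error of a
forward difference quotient. A `κ`-Lipschitz derivative bounds the first-order Taylor remainder,
`|f(x + h) - f(x) - ⟪∇f(x), h⟫| ≤ κ ‖h‖² / 2`, so every coordinate is at most `κlg κbv² σ / 2`,
and a vector of `ℝᵖ` has Euclidean norm at most `√p` times its largest coordinate.
-/

open InnerProductSpace Set
section Taylor

variable {E F : Type*} [NormedAddCommGroup E] [NormedSpace ℝ E]
  [NormedAddCommGroup F] [NormedSpace ℝ F]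

theorem norm_image_add_sub_sub_fderiv_le_of_lipschitz {f : E → F} {f' : E → E →L[ℝ] F} {K : ℝ}
    (hf : ∀ z, HasFDerivAt f (f' z) z) (hf' : ∀ y z, ‖f' y - f' z‖ ≤ K * ‖y - z‖) (x h : E) :
    ‖f (x + h) - f x - f' x h‖ ≤ K / 2 * ‖h‖ ^ 2 := by
  set φ : ℝ → F := fun t ↦ f (x + t • h) - f x - t • f' x h
  have hφ : ∀ t, HasDerivAt φ (f' (x + t • h) h - f' x h) t := by
    intro t
    have hline : HasDerivAt (fun s : ℝ ↦ x + s • h) h t := by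
      simpa using ((hasDerivAt_id t).smul_const h).const_add x
    have := (((hf _).comp_hasDerivAt t hline).sub_const (f x)).sub
      ((hasDerivAt_id t).smul_const (f' x h))
    rwa [one_smul] at this
  have hbound : ∀ t ∈ Ico (0 : ℝ) 1, ‖f' (x + t • h) h - f' x h‖ ≤ K * t * ‖h‖ ^ 2 := by
    rintro t ⟨ht, -⟩
    calc ‖f' (x + t • h) h - f' x h‖ = ‖(f' (x + t • h) - f' x) h‖ := rfl
      _ ≤ ‖f' (x + t • h) - f' x‖ * ‖h‖ := (f' (x + t • h) - f' x).le_opNorm h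
      _ ≤ K * ‖x + t • h - x‖ * ‖h‖ := by gcongr; exact hf' _ _
      _ = K * t * ‖h‖ ^ 2 := by
        rw [add_sub_cancel_left, norm_smul, Real.norm_of_nonneg ht]; ring
  have hparabola : ∀ t : ℝ, HasDerivAt (fun s ↦ K / 2 * s ^ 2 * ‖h‖ ^ 2) (K * t * ‖h‖ ^ 2) t := by
    intro t
    exact (((hasDerivAt_pow 2 t).const_mul (K / 2)).mul_const (‖h‖ ^ 2)).congr_deriv
      (by push_cast; ring)
  have hfence := image_norm_le_of_norm_deriv_right_le_deriv_boundary
    (fun t _ ↦ (hφ t).continuousAt.continuousWithinAt) (fun t _ ↦ (hφ t).hasDerivWithinAt)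
    (by simp [φ]) hparabola hbound (right_mem_Icc.2 zero_le_one)
  simpa [φ] using hfence

end Taylor

section Gradient

variable {E : Type*} [NormedAddCommGroup E] [InnerProductSpace ℝ E] [CompleteSpace E]
  {f : E → ℝ} {g : E → E} {K : ℝ}

theorem abs_image_add_sub_sub_inner_le_of_lipschitz (hf : ∀ z, HasGradientAt f (g z) z)
    (hg : ∀ y z, ‖g y - g z‖ ≤ K * ‖y - z‖) (x h : E) :
    |f (x + h) - f x - ⟪g x, h⟫_ℝ| ≤ K / 2 * ‖h‖ ^ 2 := by
  have hdual : ∀ y z, ‖toDual ℝ E (g y) - toDual ℝ E (g z)‖ ≤ K * ‖y - z‖ := fun y z ↦ by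
    rw [← map_sub, LinearIsometryEquiv.norm_map]
    exact hg y z
  simpa using norm_image_add_sub_sub_fderiv_le_of_lipschitz
    (fun z ↦ (hf z).hasFDerivAt) hdual x h

theorem abs_inner_sub_inv_mul_sub_le_of_lipschitz (hf : ∀ z, HasGradientAt f (g z) z)
    (hg : ∀ y z, ‖g y - g z‖ ≤ K * ‖y - z‖) (x v : E) {σ : ℝ} (hσ : 0 < σ) :
    |⟪g x, v⟫_ℝ - σ⁻¹ * (f (x + σ • v) - f x)| ≤ K / 2 * ‖v‖ ^ 2 * σ := by
  have hquot : ⟪g x, v⟫_ℝ - σ⁻¹ * (f (x + σ • v) - f x)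
      = -(σ⁻¹ * (f (x + σ • v) - f x - ⟪g x, σ • v⟫_ℝ)) := by
    rw [real_inner_smul_right]
    field_simp
    ring
  rw [hquot, abs_neg, abs_mul, abs_of_pos (inv_pos.2 hσ)]
  calc σ⁻¹ * |f (x + σ • v) - f x - ⟪g x, σ • v⟫_ℝ|
      ≤ σ⁻¹ * (K / 2 * ‖σ • v‖ ^ 2) := by
        gcongr
        exact abs_image_add_sub_sub_inner_le_of_lipschitz hf hg x _
    _ = K / 2 * ‖v‖ ^ 2 * σ := by
        rw [norm_smul, Real.norm_of_nonneg hσ.le]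
        field_simp

end Gradient

theorem EuclideanSpace.norm_le_sqrt_card_mul {ι : Type*} [Fintype ι] {x : EuclideanSpace ℝ ι}
    {C : ℝ} (hx : ∀ i, |x i| ≤ C) : ‖x‖ ≤ √(Fintype.card ι) * C := by
  cases isEmpty_or_nonempty ι with
  | inl _ => simp [EuclideanSpace.norm_eq]
  | inr hι =>
    have hC : 0 ≤ C := (abs_nonneg _).trans (hx hι.some)
    calc ‖x‖ = √(∑ i, |x i| ^ 2) := by simp [EuclideanSpace.norm_eq]
      _ ≤ √(∑ _ : ι, C ^ 2) := by gcongr with i; exact hx i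
      _ = √(Fintype.card ι) * C := by
        rw [Finset.sum_const, Finset.card_univ, nsmul_eq_mul, Real.sqrt_mul (by positivity),
          Real.sqrt_sq hC]

theorem mulVecE_apply_of_row_eq {p n : ℕ} {A : Matrix (Fin p) (Fin n) ℝ}
    {v : Fin p → EuclideanSpace ℝ (Fin n)} (hA : ∀ j i, A j i = v j i)
    (u : EuclideanSpace ℝ (Fin n)) (j : Fin p) : mulVecE A u j = ⟪v j, u⟫_ℝ := by
  simp [mulVecE, Matrix.mulVec, dotProduct, PiLp.inner_apply, hA, mul_comm]

/-- Residual bound for the linear interpolation conditions: if `∇f` is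
`κlg`-Lipschitz, the rows of `A` are the sampling directions `vʲ` with
`‖vʲ‖ ≤ κbv`, and `yʲ = f(x + σ vʲ) − f(x)`, then
`‖A ∇f(x) − σ⁻¹ y‖ ≤ (√p / 2) κlg κbv² σ`. -/
theorem interpolation_residual_bound {n p : ℕ}
    (f : EuclideanSpace ℝ (Fin n) → ℝ)
    (g : EuclideanSpace ℝ (Fin n) → EuclideanSpace ℝ (Fin n))
    (hf : ∀ z, HasGradientAt f (g z) z)
    (κlg : ℝ) (hκlg : 0 < κlg)
    (hlip : ∀ y z, ‖g y - g z‖ ≤ κlg * ‖y - z‖)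
    (x : EuclideanSpace ℝ (Fin n)) (σ : ℝ) (hσ : 0 < σ)
    (v : Fin p → EuclideanSpace ℝ (Fin n)) (κbv : ℝ)
    (hv : ∀ j, ‖v j‖ ≤ κbv)
    (A : Matrix (Fin p) (Fin n) ℝ) (hA : ∀ j i, A j i = v j i)
    (y : EuclideanSpace ℝ (Fin p)) (hy : ∀ j, y j = f (x + σ • v j) - f x) :
    ‖mulVecE A (g x) - σ⁻¹ • y‖ ≤ (Real.sqrt p / 2) * κlg * κbv ^ 2 * σ := by
  have hrow : ∀ j, |(mulVecE A (g x) - σ⁻¹ • y) j| ≤ κlg / 2 * κbv ^ 2 * σ := by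
    intro j
    have hj : (mulVecE A (g x) - σ⁻¹ • y) j = ⟪g x, v j⟫_ℝ - σ⁻¹ * (f (x + σ • v j) - f x) := by
      rw [PiLp.sub_apply, PiLp.smul_apply, smul_eq_mul, hy, mulVecE_apply_of_row_eq hA,
        real_inner_comm]
    have hvj : ‖v j‖ ^ 2 ≤ κbv ^ 2 := pow_le_pow_left₀ (norm_nonneg _) (hv j) 2
    rw [hj]
    calc _ ≤ κlg / 2 * ‖v j‖ ^ 2 * σ :=
          abs_inner_sub_inv_mul_sub_le_of_lipschitz hf hlip x (v j) hσ
      _ ≤ κlg / 2 * κbv ^ 2 * σ := by gcongr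
  calc ‖mulVecE A (g x) - σ⁻¹ • y‖ ≤ √(Fintype.card (Fin p)) * (κlg / 2 * κbv ^ 2 * σ) :=
        EuclideanSpace.norm_le_sqrt_card_mul hrow
    _ = (Real.sqrt p / 2) * κlg * κbv ^ 2 * σ := by rw [Fintype.card_fin]; ring
end

section
/- Let F : ℝⁿ → ℝᵐ be differentiable with Jacobian J, and suppose each component gradient ∇F⁽ⁱ⁾ (i = 1, …, m) is Lipschitz continuous with constant κ_lg > 0 and ∇F⁽ⁱ⁾(x) is s-sparse at the point x ∈ ℝⁿ. Let σ > 0 and v¹, …, v^p ∈ ℝⁿ with ‖vʲ‖ ≤ κ_bv for all j, let A ∈ ℝ^{p×n} be the matrix whose j-th row is (vʲ)ᵀ, and for each i let y⁽ⁱ⁾ ∈ ℝ^p have entries yʲ⁽ⁱ⁾ = F⁽ⁱ⁾(x + σvʲ) − F⁽ⁱ⁾(x). Assume A has the s-sparse ℓ1-recovery property with constant c₁ > 0. For each i, let g⁽ⁱ⁾ be a minimizer of ‖g‖₁ over {g ∈ ℝⁿ : ‖Ag − σ⁻¹y⁽ⁱ⁾‖ ≤ (√p/2) κ_lg κ_bv²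 σ}, and let J_m ∈ ℝ^{m×n} be the matrix whose i-th row is (g⁽ⁱ⁾)ᵀ. Then ‖J_m − J(x)‖_F ≤ (√(mp)/2) c₁ κ_lg κ_bv² σ, where ‖·‖_F is the Frobenius norm. -/
open Filter Matrix MeasureTheory

/-- The `i`-th row of a matrix, as a Euclidean vector. -/
noncomputable def rowE {m n : ℕ} (A : Matrix (Fin m) (Fin n) ℝ) (i : Fin m) :
    EuclideanSpace ℝ (Fin n) :=
  (WithLp.equiv 2 (Fin n → ℝ)).symm (A i)

/-- The Frobenius norm of a matrix. -/
noncomputable def frobNorm {m n : ℕ} (A : Matrix (Fin m) (Fin n) ℝ) : ℝ :=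
  Real.sqrt (∑ i, ∑ j, (A i j) ^ 2)

/-- `A` has the `s`-sparse `ℓ¹`-recovery property with constant `c₁`. -/
def RecoveryProperty {p n : ℕ} (s : ℕ) (A : Matrix (Fin p) (Fin n) ℝ)
    (c₁ : ℝ) : Prop :=
  ∀ xhat : EuclideanSpace ℝ (Fin n), IsSparse s xhat →
    ∀ ξ : ℝ, 0 ≤ ξ →
      ∀ y : EuclideanSpace ℝ (Fin p), ‖mulVecE A xhat - y‖ ≤ ξ →
        ∀ xstar : EuclideanSpace ℝ (Fin n), ‖mulVecE A xstar - y‖ ≤ ξ →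
          (∀ x : EuclideanSpace ℝ (Fin n), ‖mulVecE A x - y‖ ≤ ξ →
            oneNorm xstar ≤ oneNorm x) →
          ‖xstar - xhat‖ ≤ c₁ * ξ

/-!
Each row is treated separately. A gradient with Lipschitz constant `κlg` leaves a Taylor
remainder of at most `κlg/2 · ‖σ vʲ‖²`, so every entry of the forward-difference vector
`σ⁻¹ y⁽ⁱ⁾` is within `κlg κbv² σ / 2` of the corresponding entry of `A ∇F⁽ⁱ⁾(x)`. Hence the
sparse true gradient is itself feasible for the `ℓ¹` problem, and the recovery property bounds
`‖g⁽ⁱ⁾ − ∇F⁽ⁱ⁾(x)‖` by `c₁` times the radius; summing the squares of the `m` rows gives the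
factor `√m`.
-/

open Set

theorem abs_sub_sub_inner_le_of_lipschitz_gradient {E : Type*} [NormedAddCommGroup E]
    [InnerProductSpace ℝ E] [CompleteSpace E] {f : E → ℝ} {f' : E → E} {L : ℝ}
    (hf : ∀ z, HasGradientAt f (f' z) z) (hf' : ∀ a b, ‖f' a - f' b‖ ≤ L * ‖a - b‖)
    (x h : E) : |f (x + h) - f x - inner ℝ (f' x) h| ≤ L / 2 * ‖h‖ ^ 2 := by
  set ψ : ℝ → ℝ := fun t => f (x + t • h) - f x - t * inner ℝ (f' x) h
  have hψ : ∀ t, HasDerivAt ψ (inner ℝ (f' (x + t • h) - f' x) h) t := by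
    intro t
    have hline : HasDerivAt (fun t : ℝ => x + t • h) h t := by
      simpa using ((hasDerivAt_id t).smul_const h).const_add x
    have hcomp : HasDerivAt (fun t : ℝ => f (x + t • h)) (inner ℝ (f' (x + t • h)) h) t :=
      (hf _).hasFDerivAt.comp_hasDerivAt t hline
    rw [inner_sub_left]
    exact (hcomp.sub_const (f x)).sub (hasDerivAt_mul_const _)
  have hψ_le : ∀ t ∈ Ico (0 : ℝ) 1, ‖inner ℝ (f' (x + t • h) - f' x) h‖ ≤ L * ‖h‖ ^ 2 * t := by
    rintro t ⟨ht, -⟩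
    calc ‖inner ℝ (f' (x + t • h) - f' x) h‖ ≤ ‖f' (x + t • h) - f' x‖ * ‖h‖ :=
          norm_inner_le_norm _ _
      _ ≤ L * ‖t • h‖ * ‖h‖ := by gcongr; simpa using hf' (x + t • h) x
      _ = L * ‖h‖ ^ 2 * t := by rw [norm_smul, Real.norm_of_nonneg ht]; ring
  have hB : ∀ t, HasDerivAt (fun t => L / 2 * ‖h‖ ^ 2 * t ^ 2) (L * ‖h‖ ^ 2 * t) t := fun t =>
    ((hasDerivAt_pow 2 t).const_mul (L / 2 * ‖h‖ ^ 2)).congr_deriv (by push_cast; ring)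
  simpa [ψ] using image_norm_le_of_norm_deriv_right_le_deriv_boundary (a := 0) (b := 1)
    (fun t _ => (hψ t).continuousAt.continuousWithinAt) (fun t _ => (hψ t).hasDerivWithinAt)
    (by simp [ψ]) hB hψ_le (right_mem_Icc.2 zero_le_one)

theorem abs_inner_gradient_sub_forward_difference_le {E : Type*} [NormedAddCommGroup E]
    [InnerProductSpace ℝ E] [CompleteSpace E] {f : E → ℝ} {f' : E → E} {L : ℝ}
    (hf : ∀ z, HasGradientAt f (f' z) z) (hf' : ∀ a b, ‖f' a - f' b‖ ≤ L * ‖a - b‖)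
    (x d : E) {σ : ℝ} (hσ : 0 < σ) :
    |inner ℝ (f' x) d - σ⁻¹ * (f (x + σ • d) - f x)| ≤ L / 2 * ‖d‖ ^ 2 * σ := by
  have hrem := abs_sub_sub_inner_le_of_lipschitz_gradient hf hf' x (σ • d)
  rw [inner_smul_right, norm_smul, Real.norm_of_nonneg hσ.le] at hrem
  have hdiff : inner ℝ (f' x) d - σ⁻¹ * (f (x + σ • d) - f x)
      = -σ⁻¹ * (f (x + σ • d) - f x - σ * inner ℝ (f' x) d) := by
    field_simp
    ring
  rw [hdiff, abs_mul, abs_neg, abs_inv, abs_of_pos hσ, inv_mul_le_iff₀ hσ]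
  linarith

theorem Real.sqrt_sum_sq_le_sqrt_card_mul {ι : Type*} [Fintype ι] {a : ι → ℝ} {b : ℝ}
    (h : ∀ i, |a i| ≤ b) : √(∑ i, a i ^ 2) ≤ √(Fintype.card ι) * b := by
  rcases isEmpty_or_nonempty ι with _ | ⟨⟨i₀⟩⟩
  · simp
  have hb : 0 ≤ b := (abs_nonneg _).trans (h i₀)
  calc √(∑ i, a i ^ 2) ≤ √(∑ _i : ι, b ^ 2) :=
        Real.sqrt_le_sqrt (Finset.sum_le_sum fun i _ => sq_le_sq.2 ((h i).trans (le_abs_self b)))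
    _ = √(Fintype.card ι) * b := by
        rw [Finset.sum_const, Finset.card_univ, nsmul_eq_mul, Real.sqrt_mul (Nat.cast_nonneg _),
          Real.sqrt_sq hb]

theorem mulVecE_apply_eq_inner {p n : ℕ} {A : Matrix (Fin p) (Fin n) ℝ}
    {v : Fin p → EuclideanSpace ℝ (Fin n)} (hA : ∀ j i, A j i = v j i)
    (w : EuclideanSpace ℝ (Fin n)) (j : Fin p) : mulVecE A w j = inner ℝ w (v j) := by
  simp [mulVecE, Matrix.mulVec, dotProduct, PiLp.inner_apply, hA, mul_comm]

theorem frobNorm_eq_sqrt_sum_norm_rowE_sq {m n : ℕ} (M : Matrix (Fin m) (Fin n) ℝ) :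
    frobNorm M = √(∑ i, ‖rowE M i‖ ^ 2) := by
  simp [frobNorm, rowE, EuclideanSpace.norm_sq_eq]

theorem norm_mulVecE_gradient_sub_forward_differences_le {n p : ℕ}
    {f : EuclideanSpace ℝ (Fin n) → ℝ} {f' : EuclideanSpace ℝ (Fin n) → EuclideanSpace ℝ (Fin n)}
    {L : ℝ} (hL : 0 ≤ L) (hf : ∀ z, HasGradientAt f (f' z) z)
    (hf' : ∀ a b, ‖f' a - f' b‖ ≤ L * ‖a - b‖) (x : EuclideanSpace ℝ (Fin n)) {σ : ℝ}
    (hσ : 0 < σ) {v : Fin p → EuclideanSpace ℝ (Fin n)} {κ : ℝ} (hv : ∀ j, ‖v j‖ ≤ κ)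
    {A : Matrix (Fin p) (Fin n) ℝ} (hA : ∀ j i, A j i = v j i) {y : EuclideanSpace ℝ (Fin p)}
    (hy : ∀ j, y j = f (x + σ • v j) - f x) :
    ‖mulVecE A (f' x) - σ⁻¹ • y‖ ≤ √p / 2 * L * κ ^ 2 * σ := by
  have hentry : ∀ j, |‖(mulVecE A (f' x) - σ⁻¹ • y) j‖| ≤ L / 2 * κ ^ 2 * σ := fun j =>
    calc |‖(mulVecE A (f' x) - σ⁻¹ • y) j‖|
        = |inner ℝ (f' x) (v j) - σ⁻¹ * (f (x + σ • v j) - f x)| := by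
          rw [abs_norm, Real.norm_eq_abs, PiLp.sub_apply, PiLp.smul_apply, smul_eq_mul,
            mulVecE_apply_eq_inner hA, hy]
      _ ≤ L / 2 * ‖v j‖ ^ 2 * σ := abs_inner_gradient_sub_forward_difference_le hf hf' x (v j) hσ
      _ ≤ L / 2 * κ ^ 2 * σ := by gcongr; exact hv j
  rw [EuclideanSpace.norm_eq]
  calc _ ≤ √(Fintype.card (Fin p)) * (L / 2 * κ ^ 2 * σ) :=
        Real.sqrt_sum_sq_le_sqrt_card_mul hentry
    _ = √p / 2 * L * κ ^ 2 * σ := by rw [Fintype.card_fin]; ring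

theorem sparse_jacobian_model_frobenius_accuracy_general {n m p : ℕ}
    (F : EuclideanSpace ℝ (Fin n) → EuclideanSpace ℝ (Fin m))
    (J : EuclideanSpace ℝ (Fin n) → Matrix (Fin m) (Fin n) ℝ)
    (hF : ∀ z i, HasGradientAt (fun w => F w i) (rowE (J z) i) z)
    (κlg : ℝ) (hκlg : 0 < κlg)
    (hlip : ∀ i y z, ‖rowE (J y) i - rowE (J z) i‖ ≤ κlg * ‖y - z‖)
    (s : ℕ) (x : EuclideanSpace ℝ (Fin n))
    (hsparse : ∀ i, IsSparse s (rowE (J x) i))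
    (σ : ℝ) (hσ : 0 < σ)
    (v : Fin p → EuclideanSpace ℝ (Fin n)) (κbv : ℝ)
    (hv : ∀ j, ‖v j‖ ≤ κbv)
    (A : Matrix (Fin p) (Fin n) ℝ) (hA : ∀ j i, A j i = v j i)
    (y : Fin m → EuclideanSpace ℝ (Fin p))
    (hy : ∀ i j, y i j = F (x + σ • v j) i - F x i)
    (c₁ : ℝ) (hrec : RecoveryProperty s A c₁)
    (g : Fin m → EuclideanSpace ℝ (Fin n))
    (hfeas : ∀ i, ‖mulVecE A (g i) - σ⁻¹ • y i‖ ≤ (Real.sqrt p / 2) * κlg * κbv ^ 2 * σ)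
    (hmin : ∀ i, ∀ g' : EuclideanSpace ℝ (Fin n),
      ‖mulVecE A g' - σ⁻¹ • y i‖ ≤ (Real.sqrt p / 2) * κlg * κbv ^ 2 * σ →
      oneNorm (g i) ≤ oneNorm g')
    (Jm : Matrix (Fin m) (Fin n) ℝ) (hJm : ∀ i j, Jm i j = g i j) :
    frobNorm (Jm - J x) ≤ (Real.sqrt (m * p) / 2) * c₁ * κlg * κbv ^ 2 * σ := by
  have hrow : ∀ i, ‖g i - rowE (J x) i‖ ≤ c₁ * (√p / 2 * κlg * κbv ^ 2 * σ) := fun i =>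
    hrec _ (hsparse i) _ (by positivity) _
      (norm_mulVecE_gradient_sub_forward_differences_le hκlg.le (fun z => hF z i) (hlip i) x hσ
        hv hA (hy i))
      (g i) (hfeas i) (hmin i)
  have hrowE : ∀ i, rowE (Jm - J x) i = g i - rowE (J x) i := fun i => by
    ext j
    simp [rowE, hJm]
  rw [frobNorm_eq_sqrt_sum_norm_rowE_sq]
  calc _ ≤ √(Fintype.card (Fin m)) * (c₁ * (√p / 2 * κlg * κbv ^ 2 * σ)) :=
        Real.sqrt_sum_sq_le_sqrt_card_mul fun i => by rw [abs_norm, hrowE]; exact hrow i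
    _ = √(m * p) / 2 * c₁ * κlg * κbv ^ 2 * σ := by
        rw [Fintype.card_fin, Real.sqrt_mul (Nat.cast_nonneg _)]
        ring

/-- Frobenius-norm accuracy of the sparse Jacobian model built row-by-row by
`ℓ¹` minimization: `‖J_m − J(x)‖_F ≤ (√(mp)/2) c₁ κlg κbv² σ`. -/
theorem sparse_jacobian_model_frobenius_accuracy {n m p : ℕ}
    (F : EuclideanSpace ℝ (Fin n) → EuclideanSpace ℝ (Fin m))
    (J : EuclideanSpace ℝ (Fin n) → Matrix (Fin m) (Fin n) ℝ)
    (hF : ∀ z i, HasGradientAt (fun w => F w i) (rowE (J z) i) z)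
    (κlg : ℝ) (hκlg : 0 < κlg)
    (hlip : ∀ i y z, ‖rowE (J y) i - rowE (J z) i‖ ≤ κlg * ‖y - z‖)
    (s : ℕ) (x : EuclideanSpace ℝ (Fin n))
    (hsparse : ∀ i, IsSparse s (rowE (J x) i))
    (σ : ℝ) (hσ : 0 < σ)
    (v : Fin p → EuclideanSpace ℝ (Fin n)) (κbv : ℝ)
    (hv : ∀ j, ‖v j‖ ≤ κbv)
    (A : Matrix (Fin p) (Fin n) ℝ) (hA : ∀ j i, A j i = v j i)
    (y : Fin m → EuclideanSpace ℝ (Fin p))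
    (hy : ∀ i j, y i j = F (x + σ • v j) i - F x i)
    (c₁ : ℝ) (hc₁ : 0 < c₁) (hrec : RecoveryProperty s A c₁)
    (g : Fin m → EuclideanSpace ℝ (Fin n))
    (hfeas : ∀ i, ‖mulVecE A (g i) - σ⁻¹ • y i‖ ≤ (Real.sqrt p / 2) * κlg * κbv ^ 2 * σ)
    (hmin : ∀ i, ∀ g' : EuclideanSpace ℝ (Fin n),
      ‖mulVecE A g' - σ⁻¹ • y i‖ ≤ (Real.sqrt p / 2) * κlg * κbv ^ 2 * σ →
      oneNorm (g i) ≤ oneNorm g')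
    (Jm : Matrix (Fin m) (Fin n) ℝ) (hJm : ∀ i j, Jm i j = g i j) :
    frobNorm (Jm - J x) ≤ (Real.sqrt (m * p) / 2) * c₁ * κlg * κbv ^ 2 * σ :=
  sparse_jacobian_model_frobenius_accuracy_general F J hF κlg hκlg hlip s x hsparse σ hσ v κbv hv A
    hA y hy c₁ hrec g hfeas hmin Jm hJm
end

section
/- Let F : ℝⁿ → ℝᵐ be differentiable with Jacobian J, and suppose ‖J(y) − J(z)‖ ≤ κ_lj‖y − z‖, ‖J(y)‖ ≤ κ_lf and ‖F(y)‖ ≤ κ_bf for all y, z ∈ ℝⁿ. Then for all x, y ∈ ℝⁿ, |‖F(y)‖² − ‖F(x)‖² − 2(J(x)ᵀF(x))ᵀ(y − x)| ≤ (κ_lf² + κ_lj κ_bf)‖x − y‖². -/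
open Filter Matrix MeasureTheory RealInnerProductSpace

/-- The spectral norm (ℓ²-operator norm) of a matrix. -/
noncomputable def opNorm {p n : ℕ} (A : Matrix (Fin p) (Fin n) ℝ) : ℝ :=
  sSup {r : ℝ | ∃ x : EuclideanSpace ℝ (Fin n), ‖x‖ ≤ 1 ∧ r = ‖mulVecE A x‖}

/-- A matrix as a continuous linear map between Euclidean spaces. -/
noncomputable def jacCLM {p n : ℕ} (A : Matrix (Fin p) (Fin n) ℝ) :
    EuclideanSpace ℝ (Fin n) →L[ℝ] EuclideanSpace ℝ (Fin p) :=
  LinearMap.toContinuousLinearMap (Matrix.toEuclideanLin A)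

/-!
The derivative of `φ = ‖F‖²` at `z` is `2⟪F z, J z ·⟫`. Since `F` is `κlf`-Lipschitz and bounded
by `κbf`, this derivative is Lipschitz in `z` with constant `2 (κlf² + κlj κbf)`. The bound is then
the descent lemma: a function whose derivative is `M`-Lipschitz differs from its first-order
Taylor polynomial at `x` by at most `M / 2 ‖y - x‖²`, which follows by fencing the remainder
along the segment `t ↦ x + t (y - x)` with `t ↦ M / 2 ‖y - x‖² t²`.
-/

open Set

section DescentLemma

variable {E G : Type*} [NormedAddCommGroup E] [NormedSpace ℝ E]
  [NormedAddCommGroup G] [NormedSpace ℝ G]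

theorem norm_image_sub_sub_fderiv_le_of_lipschitz {f : E → G} {f' : E → E →L[ℝ] G} {M : ℝ}
    (hf : ∀ z, HasFDerivAt f (f' z) z) (hf' : ∀ y z, ‖f' y - f' z‖ ≤ M * ‖y - z‖) (x y : E) :
    ‖f y - f x - f' x (y - x)‖ ≤ M / 2 * ‖y - x‖ ^ 2 := by
  set d := y - x
  set h : ℝ → G := fun t => f (x + t • d) - f x - t • f' x d
  have hh : ∀ t, HasDerivAt h (f' (x + t • d) d - f' x d) t := by
    intro t
    have hline : HasDerivAt (fun s : ℝ => x + s • d) d t := by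
      simpa using ((hasDerivAt_id t).smul_const d).const_add x
    convert (((hf _).comp_hasDerivAt t hline).sub_const (f x)).sub
      ((hasDerivAt_id t).smul_const (f' x d)) using 1
    · rfl
    · rw [one_smul]
  have hfence : ∀ t, HasDerivAt (fun t => M / 2 * ‖d‖ ^ 2 * t ^ 2) (M * ‖d‖ ^ 2 * t) t := by
    intro t
    exact ((hasDerivAt_pow 2 t).const_mul _).congr_deriv (by norm_num; ring)
  have hbound : ∀ t ∈ Ico (0 : ℝ) 1, ‖f' (x + t • d) d - f' x d‖ ≤ M * ‖d‖ ^ 2 * t := by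
    intro t ht
    calc ‖f' (x + t • d) d - f' x d‖ = ‖(f' (x + t • d) - f' x) d‖ := rfl
      _ ≤ ‖f' (x + t • d) - f' x‖ * ‖d‖ := (f' (x + t • d) - f' x).le_opNorm d
      _ ≤ M * ‖t • d‖ * ‖d‖ := by
          gcongr
          simpa using hf' (x + t • d) x
      _ = M * ‖d‖ ^ 2 * t := by
          rw [norm_smul, Real.norm_of_nonneg ht.1]
          ring
  have hremainder := image_norm_le_of_norm_deriv_right_le_deriv_boundary
    (fun t _ => (hh t).continuousAt.continuousWithinAt) (fun t _ => (hh t).hasDerivWithinAt)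
    (by simp [h]) hfence hbound (right_mem_Icc.2 zero_le_one)
  simpa [h, d] using hremainder

end DescentLemma

section NormSq

variable {E F : Type*} [NormedAddCommGroup E] [NormedSpace ℝ E]
  [NormedAddCommGroup F] [InnerProductSpace ℝ F]

theorem norm_innerSL_comp_sub_innerSL_comp_le (u v : F) (A B : E →L[ℝ] F) :
    ‖(innerSL ℝ u).comp A - (innerSL ℝ v).comp B‖ ≤ ‖u - v‖ * ‖A‖ + ‖v‖ * ‖A - B‖ := by
  have hsplit : (innerSL ℝ u).comp A - (innerSL ℝ v).comp B =
      (innerSL ℝ (u - v)).comp A + (innerSL ℝ v).comp (A - B) := by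
    ext z
    simp
  rw [hsplit]
  refine (norm_add_le _ _).trans (add_le_add ?_ ?_) <;>
    exact (ContinuousLinearMap.opNorm_comp_le _ _).trans_eq (by rw [innerSL_apply_norm])

variable {f : E → F} {f' : E → E →L[ℝ] F} {K L B : ℝ}

theorem norm_fderiv_norm_sq_sub_le (hf : ∀ z, HasFDerivAt f (f' z) z) (hK : ∀ z, ‖f' z‖ ≤ K)
    (hL : ∀ y z, ‖f' y - f' z‖ ≤ L * ‖y - z‖) (hB : ∀ z, ‖f z‖ ≤ B) (y z : E) :
    ‖2 • (innerSL ℝ (f y)).comp (f' y) - 2 • (innerSL ℝ (f z)).comp (f' z)‖ ≤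
      2 * (K ^ 2 + L * B) * ‖y - z‖ := by
  have hlip : ‖f y - f z‖ ≤ K * ‖y - z‖ :=
    convex_univ.norm_image_sub_le_of_norm_hasFDerivWithin_le
      (fun w _ => (hf w).hasFDerivWithinAt) (fun w _ => hK w) trivial trivial
  have hK0 : 0 ≤ K := (norm_nonneg _).trans (hK y)
  have hB0 : 0 ≤ B := (norm_nonneg _).trans (hB z)
  rw [← smul_sub, ← Nat.cast_smul_eq_nsmul ℝ, norm_smul, Nat.cast_ofNat, Real.norm_two]
  calc 2 * ‖(innerSL ℝ (f y)).comp (f' y) - (innerSL ℝ (f z)).comp (f' z)‖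
      ≤ 2 * (‖f y - f z‖ * ‖f' y‖ + ‖f z‖ * ‖f' y - f' z‖) := by
        gcongr; exact norm_innerSL_comp_sub_innerSL_comp_le _ _ _ _
    _ ≤ 2 * (K * ‖y - z‖ * K + B * (L * ‖y - z‖)) := by
        gcongr
        exacts [hK y, hB z, hL y z]
    _ = 2 * (K ^ 2 + L * B) * ‖y - z‖ := by ring

theorem abs_norm_sq_sub_sub_inner_le (hf : ∀ z, HasFDerivAt f (f' z) z) (hK : ∀ z, ‖f' z‖ ≤ K)
    (hL : ∀ y z, ‖f' y - f' z‖ ≤ L * ‖y - z‖) (hB : ∀ z, ‖f z‖ ≤ B) (x y : E) :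
    |‖f y‖ ^ 2 - ‖f x‖ ^ 2 - 2 * ⟪f x, f' x (y - x)⟫| ≤ (K ^ 2 + L * B) * ‖y - x‖ ^ 2 := by
  have hdescent := norm_image_sub_sub_fderiv_le_of_lipschitz (fun z => (hf z).norm_sq)
    (norm_fderiv_norm_sq_sub_le hf hK hL hB) x y
  rw [Real.norm_eq_abs] at hdescent
  convert hdescent using 1
  · simp
  · ring

end NormSq

theorem mulVecE_eq_jacCLM_apply {p n : ℕ} (A : Matrix (Fin p) (Fin n) ℝ)
    (x : EuclideanSpace ℝ (Fin n)) : mulVecE A x = jacCLM A x :=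
  rfl

theorem opNorm_eq_norm_jacCLM {p n : ℕ} (A : Matrix (Fin p) (Fin n) ℝ) :
    opNorm A = ‖jacCLM A‖ := by
  rw [← (jacCLM A).sSup_unitClosedBall_eq_norm, opNorm]
  congr 1
  ext r
  simp [mulVecE_eq_jacCLM_apply, eq_comm]

theorem jacCLM_sub {p n : ℕ} (A B : Matrix (Fin p) (Fin n) ℝ) :
    jacCLM (A - B) = jacCLM A - jacCLM B := by
  ext1 x
  simp [jacCLM]

theorem inner_mulVecE_transpose {p n : ℕ} (A : Matrix (Fin p) (Fin n) ℝ)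
    (u : EuclideanSpace ℝ (Fin p)) (v : EuclideanSpace ℝ (Fin n)) :
    ⟪mulVecE Aᵀ u, v⟫ = ⟪u, jacCLM A v⟫ := by
  have hadj : mulVecE Aᵀ u = (toEuclideanLin A).adjoint u := by
    rw [← toEuclideanLin_conjTranspose_eq_adjoint, conjTranspose_eq_transpose_of_trivial]
    rfl
  rw [hadj, LinearMap.adjoint_inner_left]
  rfl

/-- Quadratic upper bound for `‖F‖²` around `x`:
`|‖F(y)‖² − ‖F(x)‖² − (2J(x)ᵀF(x))ᵀ(y − x)| ≤ (κlf² + κlj κbf)‖x − y‖²`. -/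
theorem normSq_quadratic_bound {n m : ℕ}
    (F : EuclideanSpace ℝ (Fin n) → EuclideanSpace ℝ (Fin m))
    (J : EuclideanSpace ℝ (Fin n) → Matrix (Fin m) (Fin n) ℝ)
    (hF : ∀ z, HasFDerivAt F (jacCLM (J z)) z)
    (κlj κlf κbf : ℝ)
    (hJlip : ∀ y z, opNorm (J y - J z) ≤ κlj * ‖y - z‖)
    (hJb : ∀ y, opNorm (J y) ≤ κlf)
    (hFb : ∀ y, ‖F y‖ ≤ κbf) :
    ∀ x y : EuclideanSpace ℝ (Fin n),
      |‖F y‖ ^ 2 - ‖F x‖ ^ 2 - 2 * ⟪mulVecE (J x)ᵀ (F x), y - x⟫| ≤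
        (κlf ^ 2 + κlj * κbf) * ‖x - y‖ ^ 2 := by
  intro x y
  have hK : ∀ z, ‖jacCLM (J z)‖ ≤ κlf := fun z => opNorm_eq_norm_jacCLM (J z) ▸ hJb z
  have hL : ∀ y z, ‖jacCLM (J y) - jacCLM (J z)‖ ≤ κlj * ‖y - z‖ := fun y z => by
    simpa only [opNorm_eq_norm_jacCLM, jacCLM_sub] using hJlip y z
  rw [inner_mulVecE_transpose, norm_sub_rev x y]
  exact abs_norm_sq_sub_sub_inner_le hF hK hL hFb x y
end

section
/- Let J ∈ ℝ^{m×n} with J ≠ 0, F ∈ ℝᵐ, λ > 0, and let d be the LM step, i.e., the unique solution of (JᵀJ + λI)d = −JᵀF. Then ‖F‖² − ‖F + Jd‖² ≥ ‖JᵀF‖ · min{ ‖d‖, ‖JᵀF‖/‖JᵀJ‖ }. -/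
/-!
Write `g = Jᵀ F` and `M = JᵀJ + λ I`, so that `M d = -g`. Expanding the square, the decrease
`‖F‖² - ‖F + J d‖²` equals `⟪M d, d⟫ + λ ‖d‖²`. Since `M` is a positive operator of norm at most
`‖JᵀJ‖ + λ`, we have `‖g‖² = ‖M d‖² ≤ ‖M‖ ⟪M d, d⟫` and `‖g‖ ≤ ‖M‖ ‖d‖`; these two bounds give the
claim by an elementary case distinction on which term realises the minimum.
-/

open Filter Matrix MeasureTheory

open scoped InnerProductSpace

theorem mul_min_div_le_of_sq_le {a δ N lm Q : ℝ} (ha : 0 ≤ a) (hδ : 0 ≤ δ) (hN : 0 ≤ N)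
    (hlm : 0 ≤ lm) (hQ : 0 ≤ Q) (ha_sq : a ^ 2 ≤ (N + lm) * Q) (ha_le : a ≤ (N + lm) * δ) :
    a * min δ (a / N) ≤ Q + lm * δ ^ 2 := by
  rcases hN.eq_or_lt with rfl | hN
  · simp only [div_zero, min_eq_right hδ, mul_zero]
    positivity
  have hNlm : 0 < N + lm := by linarith
  rcases le_total δ (a / N) with hδa | haδ
  · rw [min_eq_left hδa]
    have hNδ : N * δ ≤ a := (le_div_iff₀' hN).mp hδa
    -- `(N + lm) (Q + lm δ² - a δ) ≥ a (a - N δ) + lm δ ((N + lm) δ - a) ≥ 0`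
    refine le_of_mul_le_mul_left ?_ hNlm
    nlinarith [mul_nonneg ha (sub_nonneg.mpr hNδ),
      mul_nonneg (mul_nonneg hlm hδ) (sub_nonneg.mpr ha_le)]
  · rw [min_eq_right haδ, mul_div_assoc', div_le_iff₀ hN]
    have haNδ : a ≤ N * δ := (div_le_iff₀' hN).mp haδ
    refine le_of_mul_le_mul_left ?_ hNlm
    nlinarith [mul_le_mul_of_nonneg_left ha_sq hN.le,
      mul_le_mul_of_nonneg_left (mul_self_le_mul_self ha haNδ) hlm,
      mul_nonneg (mul_nonneg (sq_nonneg lm) hN.le) (sq_nonneg δ)]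

namespace ContinuousLinearMap

theorem IsPositive.sq_norm_apply_le {E : Type*} [NormedAddCommGroup E] [InnerProductSpace ℝ E]
    {T : E →L[ℝ] E} (hT : T.IsPositive) (x : E) :
    ‖T x‖ ^ 2 ≤ ‖T‖ * ⟪T x, x⟫_ℝ := by
  rcases (norm_nonneg T).eq_or_lt with hT0 | hTpos
  · simp [norm_eq_zero.mp hT0.symm]
  set t := ‖T‖⁻¹
  -- `0 ≤ ⟪T y, y⟫` for `y = x - ‖T‖⁻¹ • T x`
  have hquad : 0 ≤ ⟪T x, x⟫_ℝ - 2 * t * ‖T x‖ ^ 2 + t ^ 2 * ⟪T (T x), T x⟫_ℝ := by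
    have h := hT.inner_nonneg_left (x - t • T x)
    simp only [map_sub, map_smul, inner_sub_left, inner_sub_right, real_inner_smul_left,
      real_inner_smul_right, hT.inner_left_eq_inner_right (T x) x,
      real_inner_self_eq_norm_sq] at h
    linarith
  have hTT : ⟪T (T x), T x⟫_ℝ ≤ ‖T‖ * ‖T x‖ ^ 2 :=
    (real_inner_le_norm _ _).trans <| by nlinarith [T.le_opNorm (T x), norm_nonneg (T x)]
  have ht : ‖T‖ * t = 1 := mul_inv_cancel₀ hTpos.ne'
  have hscale : t ^ 2 * (‖T‖ * ‖T x‖ ^ 2) = t * ‖T x‖ ^ 2 := by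
    linear_combination t * ‖T x‖ ^ 2 * ht
  have hx : t * ‖T x‖ ^ 2 ≤ ⟪T x, x⟫_ℝ := by
    linarith [mul_le_mul_of_nonneg_left hTT (sq_nonneg t)]
  calc ‖T x‖ ^ 2 = ‖T‖ * (t * ‖T x‖ ^ 2) := by linear_combination -‖T x‖ ^ 2 * ht
    _ ≤ ‖T‖ * ⟪T x, x⟫_ℝ := by gcongr

variable {E F : Type*} [NormedAddCommGroup E] [InnerProductSpace ℝ E] [CompleteSpace E]
  [NormedAddCommGroup F] [InnerProductSpace ℝ F] [CompleteSpace F]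

theorem norm_sq_sub_norm_add_apply_sq_of_lm_step (A : E →L[ℝ] F) (f : F)
    {lm : ℝ} {d : E} (hd : (adjoint A ∘L A + lm • 1) d = -adjoint A f) :
    ‖f‖ ^ 2 - ‖f + A d‖ ^ 2 = ⟪(adjoint A ∘L A + lm • 1) d, d⟫_ℝ + lm * ‖d‖ ^ 2 := by
  have hfA : ⟪f, A d⟫_ℝ = -⟪(adjoint A ∘L A + lm • 1) d, d⟫_ℝ := by
    rw [hd, inner_neg_left, neg_neg, adjoint_inner_left]
  have hAd : ‖A d‖ ^ 2 = ⟪(adjoint A ∘L A + lm • 1) d, d⟫_ℝ - lm * ‖d‖ ^ 2 := by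
    simp [inner_add_left, real_inner_smul_left, adjoint_inner_left]
  rw [norm_add_sq_real, hfA, hAd]
  ring

theorem cauchy_decrease_of_lm_step (A : E →L[ℝ] F) (f : F) {lm : ℝ} (hlm : 0 ≤ lm) {d : E}
    (hd : (adjoint A ∘L A + lm • 1) d = -adjoint A f) :
    ‖adjoint A f‖ * min ‖d‖ (‖adjoint A f‖ / ‖adjoint A ∘L A‖) ≤ ‖f‖ ^ 2 - ‖f + A d‖ ^ 2 := by
  set M := adjoint A ∘L A + lm • 1
  have hM : M.IsPositive :=
    (isPositive_adjoint_comp_self A).add (isPositive_one.smul_of_nonneg hlm)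
  have hM_norm : ‖M‖ ≤ ‖adjoint A ∘L A‖ + lm := by
    refine (norm_add_le _ _).trans (add_le_add le_rfl ?_)
    rw [norm_smul, Real.norm_of_nonneg hlm]
    exact mul_le_of_le_one_right hlm norm_id_le
  rw [norm_sq_sub_norm_add_apply_sq_of_lm_step A f hd]
  refine mul_min_div_le_of_sq_le (norm_nonneg _) (norm_nonneg d) (norm_nonneg _) hlm
    (hM.inner_nonneg_left d) ?_ ?_
  · calc ‖adjoint A f‖ ^ 2 = ‖M d‖ ^ 2 := by rw [hd, norm_neg]
      _ ≤ ‖M‖ * ⟪M d, d⟫_ℝ := hM.sq_norm_apply_le d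
      _ ≤ _ := mul_le_mul_of_nonneg_right hM_norm (hM.inner_nonneg_left d)
  · calc ‖adjoint A f‖ = ‖M d‖ := by rw [hd, norm_neg]
      _ ≤ ‖M‖ * ‖d‖ := M.le_opNorm d
      _ ≤ _ := mul_le_mul_of_nonneg_right hM_norm (norm_nonneg d)

end ContinuousLinearMap

namespace Matrix

variable {𝕜 : Type*} [RCLike 𝕜] {l m n : Type*}

/-- The rectangular analogue of `Matrix.toEuclideanCLM`, which only covers square matrices. -/
noncomputable def toEuclideanCLM' [Fintype m] [Fintype n] [DecidableEq n] :
    Matrix m n 𝕜 ≃ₗ[𝕜] (EuclideanSpace 𝕜 n →L[𝕜] EuclideanSpace 𝕜 m) :=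
  toEuclideanLin.trans LinearMap.toContinuousLinearMap

theorem toEuclideanCLM'_apply [Fintype m] [Fintype n] [DecidableEq n] (A : Matrix m n 𝕜)
    (x : EuclideanSpace 𝕜 n) : toEuclideanCLM' A x = WithLp.toLp 2 (A *ᵥ WithLp.ofLp x) := rfl

theorem toEuclideanCLM'_mul [Fintype l] [Fintype m] [DecidableEq m] [Fintype n] [DecidableEq n]
    (A : Matrix l m 𝕜) (B : Matrix m n 𝕜) :
    toEuclideanCLM' (A * B) = toEuclideanCLM' A ∘L toEuclideanCLM' B := by
  ext x : 1
  simp [toEuclideanCLM'_apply, mulVec_mulVec]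

theorem toEuclideanCLM'_one [Fintype n] [DecidableEq n] :
    toEuclideanCLM' (1 : Matrix n n 𝕜) = 1 := by
  ext x : 1
  simp [toEuclideanCLM'_apply]

theorem adjoint_toEuclideanCLM' [Fintype m] [DecidableEq m] [Fintype n] [DecidableEq n]
    (A : Matrix m n 𝕜) :
    ContinuousLinearMap.adjoint (toEuclideanCLM' A) = toEuclideanCLM' Aᴴ := by
  apply ContinuousLinearMap.coe_injective
  rw [← ContinuousLinearMap.adjoint_toLinearMap]
  exact (toEuclideanLin_conjTranspose_eq_adjoint A).symm

end Matrix

theorem mulVecE_eq_toEuclideanCLM' {p n : ℕ} (A : Matrix (Fin p) (Fin n) ℝ)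
    (x : EuclideanSpace ℝ (Fin n)) : mulVecE A x = toEuclideanCLM' A x := rfl

theorem opNorm_eq_norm_toEuclideanCLM' {p n : ℕ} (A : Matrix (Fin p) (Fin n) ℝ) :
    opNorm A = ‖toEuclideanCLM' A‖ := by
  rw [← (toEuclideanCLM' A).sSup_unitClosedBall_eq_norm, opNorm]
  congr 1
  ext r
  simp [mulVecE_eq_toEuclideanCLM', eq_comm]

theorem lm_step_cauchy_decrease_general {m n : ℕ}
    (J : Matrix (Fin m) (Fin n) ℝ)
    (F : EuclideanSpace ℝ (Fin m))
    (lm : ℝ) (hlm : 0 < lm)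
    (d : EuclideanSpace ℝ (Fin n))
    (hd : (Jᵀ * J + lm • (1 : Matrix (Fin n) (Fin n) ℝ)).mulVec d
      = -(Jᵀ.mulVec F)) :
    ‖F‖ ^ 2 - ‖F + mulVecE J d‖ ^ 2 ≥
      ‖mulVecE Jᵀ F‖ * min ‖d‖ (‖mulVecE Jᵀ F‖ / opNorm (Jᵀ * J)) := by
  set A := toEuclideanCLM' J
  have hadj : ContinuousLinearMap.adjoint A = toEuclideanCLM' Jᵀ := by
    rw [adjoint_toEuclideanCLM', conjTranspose_eq_transpose_of_trivial]
  have hstep : (ContinuousLinearMap.adjoint A ∘L A + lm • 1) d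
      = -ContinuousLinearMap.adjoint A F := by
    rw [hadj, ← toEuclideanCLM'_mul, ← toEuclideanCLM'_one, ← map_smul, ← map_add]
    exact congrArg (WithLp.toLp 2) hd
  have := A.cauchy_decrease_of_lm_step F hlm.le hstep
  rwa [hadj, ← toEuclideanCLM'_mul, ← opNorm_eq_norm_toEuclideanCLM'] at this

/-- Cauchy-type decrease of the LM step (Powell):
`‖F‖² − ‖F + Jd‖² ≥ ‖JᵀF‖ · min{‖d‖, ‖JᵀF‖/‖JᵀJ‖}`. -/
theorem lm_step_cauchy_decrease {m n : ℕ}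
    (J : Matrix (Fin m) (Fin n) ℝ) (hJ : J ≠ 0)
    (F : EuclideanSpace ℝ (Fin m))
    (lm : ℝ) (hlm : 0 < lm)
    (d : EuclideanSpace ℝ (Fin n))
    (hd : (Jᵀ * J + lm • (1 : Matrix (Fin n) (Fin n) ℝ)).mulVec d
      = -(Jᵀ.mulVec F)) :
    ‖F‖ ^ 2 - ‖F + mulVecE J d‖ ^ 2 ≥
      ‖mulVecE Jᵀ F‖ * min ‖d‖ (‖mulVecE Jᵀ F‖ / opNorm (Jᵀ * J)) :=
  lm_step_cauchy_decrease_general J F lm hlm d hd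
end

section
/- Let (Ω, 𝔉, ℙ) be a probability space with a filtration (𝔉_k)_{k≥0}, let β ∈ (0,1), and let (T_k)_{k≥0} be events with T_k ∈ 𝔉_k and ℙ(T_k | 𝔉_{k−1}) ≥ β almost surely for all k ≥ 1 (and ℙ(T_0) ≥ β). Define W_j = Σ_{k=0}^{j} (1_{T_k} − β). Then ℙ(limsup_{j→∞} W_j = +∞) = 1. -/
/-!
The walk `W` is a submartingale, since its increment `1_{T (k+1)} - β` has nonnegative conditional
expectation, and its increments are bounded by `1`. By the one-sided martingale bound, almost
every path of `W` is either unbounded above or convergent. It cannot converge: each increment is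
`1 - β` or `-β`, so it stays at distance at least `min β (1 - β)` from `0`. Hence almost every path
is unbounded above, i.e. has limsup `⊤`.
-/

open Filter MeasureTheory Topology

theorem not_tendsto_of_le_dist_succ {X : Type*} [PseudoMetricSpace X] {u : ℕ → X} {ε : ℝ}
    (hε : 0 < ε) (hu : ∀ n, ε ≤ dist (u (n + 1)) (u n)) (x : X) :
    ¬Tendsto u atTop (𝓝 x) := by
  intro hux
  have hdist : Tendsto (fun n => dist (u (n + 1)) (u n)) atTop (𝓝 0) := by
    simpa using (hux.comp (tendsto_add_atTop_nat 1)).dist hux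
  obtain ⟨n, hn⟩ := (hdist.eventually (eventually_lt_nhds hε)).exists
  exact (hu n).not_gt hn

theorem EReal.limsup_coe_eq_top_of_not_bddAbove {u : ℕ → ℝ} (hu : ¬BddAbove (Set.range u)) :
    atTop.limsup (fun n => (u n : EReal)) = ⊤ := by
  have hfreq : ∀ r : ℝ, ∃ᶠ n in atTop, r ≤ u n := by
    intro r
    by_contra h
    refine hu (IsBoundedUnder.bddAbove_range ⟨r, ?_⟩)
    filter_upwards [not_frequently.1 h] with n hn using (not_le.1 hn).le
  refine (EReal.eq_top_iff_forall_lt _).2 fun r => ?_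
  calc (r : EReal) < (r + 1 : ℝ) := by exact_mod_cast lt_add_one r
    _ ≤ _ := le_limsup_of_frequently_le' ((hfreq (r + 1)).mono fun n h => by exact_mod_cast h)

section Indicator

variable {Ω : Type*} {s : Set Ω} {β : ℝ}

theorem abs_indicator_one_sub_le (hβ : β ∈ Set.Icc (0 : ℝ) 1) (ω : Ω) :
    |s.indicator (fun _ => (1 : ℝ)) ω - β| ≤ 1 := by
  obtain ⟨hβ0, hβ1⟩ := hβ
  by_cases hω : ω ∈ s <;>
    simp only [hω, Set.indicator_of_mem, Set.indicator_of_notMem, not_false_eq_true] <;>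
    rw [abs_le] <;> constructor <;> linarith

theorem min_le_abs_indicator_one_sub (ω : Ω) :
    min β (1 - β) ≤ |s.indicator (fun _ => (1 : ℝ)) ω - β| := by
  by_cases hω : ω ∈ s
  · simpa [hω] using (min_le_right β (1 - β)).trans (le_abs_self _)
  · simpa [hω] using (min_le_left β (1 - β)).trans (le_abs_self _)

end Indicator

section IndicatorWalk

variable {Ω : Type*} {mΩ : MeasurableSpace Ω} {μ : Measure Ω} {𝔉 : Filtration ℕ mΩ}
  {T : ℕ → Set Ω} {β : ℝ}

noncomputable def indicatorWalk (T : ℕ → Set Ω) (β : ℝ) (j : ℕ) (ω : Ω) : ℝ :=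
  ∑ k ∈ Finset.range (j + 1), ((T k).indicator (fun _ => (1 : ℝ)) ω - β)

theorem indicatorWalk_succ_sub (j : ℕ) (ω : Ω) :
    indicatorWalk T β (j + 1) ω - indicatorWalk T β j ω
      = (T (j + 1)).indicator (fun _ => (1 : ℝ)) ω - β := by
  simp only [indicatorWalk, Finset.sum_range_succ _ (j + 1), add_sub_cancel_left]

theorem stronglyAdapted_indicatorWalk (hT : ∀ k, MeasurableSet[𝔉 k] (T k)) :
    StronglyAdapted 𝔉 (indicatorWalk T β) := fun _ =>
  Finset.stronglyMeasurable_fun_sum _ fun k hk =>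
    ((stronglyMeasurable_const.indicator (hT k)).mono
      (𝔉.mono (Nat.lt_succ_iff.1 (Finset.mem_range.1 hk)))).sub stronglyMeasurable_const

theorem integrable_indicatorWalk [IsFiniteMeasure μ] (hT : ∀ k, MeasurableSet (T k)) (j : ℕ) :
    Integrable (indicatorWalk T β j) μ :=
  integrable_finsetSum _ fun k _ =>
    ((integrable_const (1 : ℝ)).indicator (hT k)).sub (integrable_const β)

theorem submartingale_indicatorWalk [IsFiniteMeasure μ] (hT : ∀ k, MeasurableSet[𝔉 k] (T k))
    (hcond : ∀ k, ∀ᵐ ω ∂μ, β ≤ (μ[(T (k + 1)).indicator (fun _ => (1 : ℝ)) | 𝔉 k]) ω) :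
    Submartingale (indicatorWalk T β) 𝔉 μ := by
  refine submartingale_of_condExp_sub_nonneg_nat (stronglyAdapted_indicatorWalk hT)
    (integrable_indicatorWalk fun k => 𝔉.le k _ (hT k)) fun k => ?_
  have hincr : indicatorWalk T β (k + 1) - indicatorWalk T β k
      = (T (k + 1)).indicator (fun _ => (1 : ℝ)) - fun _ => β :=
    funext (indicatorWalk_succ_sub k)
  have hint : Integrable ((T (k + 1)).indicator (fun _ => (1 : ℝ))) μ :=
    (integrable_const (1 : ℝ)).indicator (𝔉.le (k + 1) _ (hT (k + 1)))
  rw [hincr]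
  filter_upwards [condExp_sub hint (integrable_const β) (𝔉 k), hcond k] with ω hsub hβω
  rw [hsub, Pi.sub_apply, condExp_const (𝔉.le k), Pi.zero_apply, sub_nonneg]
  exact hβω

theorem ae_not_bddAbove_indicatorWalk [IsFiniteMeasure μ] (hβ : β ∈ Set.Ioo (0 : ℝ) 1)
    (hT : ∀ k, MeasurableSet[𝔉 k] (T k))
    (hcond : ∀ k, ∀ᵐ ω ∂μ, β ≤ (μ[(T (k + 1)).indicator (fun _ => (1 : ℝ)) | 𝔉 k]) ω) :
    ∀ᵐ ω ∂μ, ¬BddAbove (Set.range fun n => indicatorWalk T β n ω) := by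
  have hbdd : ∀ᵐ ω ∂μ, ∀ k, |indicatorWalk T β (k + 1) ω - indicatorWalk T β k ω| ≤ (1 : NNReal) :=
    ae_of_all _ fun ω k => by
      rw [indicatorWalk_succ_sub, NNReal.coe_one]
      exact abs_indicator_one_sub_le (Set.Ioo_subset_Icc_self hβ) ω
  have hmin : 0 < min β (1 - β) := lt_min hβ.1 (sub_pos.2 hβ.2)
  filter_upwards [(submartingale_indicatorWalk hT hcond).bddAbove_iff_exists_tendsto hbdd]
    with ω hω
  rw [hω]
  rintro ⟨c, hc⟩
  refine not_tendsto_of_le_dist_succ hmin (fun k => ?_) c hc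
  rw [Real.dist_eq, indicatorWalk_succ_sub]
  exact min_le_abs_indicator_one_sub ω

end IndicatorWalk

theorem random_walk_limsup_top_general {Ω : Type*} {mΩ : MeasurableSpace Ω}
    (μ : Measure Ω) [IsProbabilityMeasure μ]
    (𝔉 : Filtration ℕ mΩ) (β : ℝ) (hβ : β ∈ Set.Ioo (0 : ℝ) 1)
    (T : ℕ → Set Ω) (hTmeas : ∀ k, MeasurableSet[𝔉 k] (T k))
    (hcond : ∀ k, 1 ≤ k →
      ∀ᵐ ω ∂μ, β ≤ (μ[(T k).indicator (fun _ => (1 : ℝ)) | 𝔉 (k - 1)]) ω) :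
    μ {ω | Filter.atTop.limsup
        (fun j => ((∑ k ∈ Finset.range (j + 1),
          ((T k).indicator (fun _ => (1 : ℝ)) ω - β) : ℝ) : EReal)) = ⊤} = 1 := by
  have hcond' : ∀ k, ∀ᵐ ω ∂μ, β ≤ (μ[(T (k + 1)).indicator (fun _ => (1 : ℝ)) | 𝔉 k]) ω :=
    fun k => by simpa using hcond (k + 1) le_add_self
  have hae : ∀ᵐ ω ∂μ, atTop.limsup (fun j => (indicatorWalk T β j ω : EReal)) = ⊤ := by
    filter_upwards [ae_not_bddAbove_indicatorWalk hβ hTmeas hcond'] with ω hω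
    exact EReal.limsup_coe_eq_top_of_not_bddAbove hω
  exact (measure_congr (eventuallyEq_univ.2 hae)).trans measure_univ

/-- Random-walk submartingale lemma: if each event `T k` has conditional
probability at least `β ∈ (0,1)` given the past, then the random walk
`W j = ∑_{k=0}^{j} (1_{T k} − β)` has `limsup W j = +∞` almost surely. -/
theorem random_walk_limsup_top {Ω : Type*} {mΩ : MeasurableSpace Ω}
    (μ : Measure Ω) [IsProbabilityMeasure μ]
    (𝔉 : Filtration ℕ mΩ) (β : ℝ) (hβ : β ∈ Set.Ioo (0 : ℝ) 1)
    (T : ℕ → Set Ω) (hTmeas : ∀ k, MeasurableSet[𝔉 k] (T k))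
    (hT0 : ENNReal.ofReal β ≤ μ (T 0))
    (hcond : ∀ k, 1 ≤ k →
      ∀ᵐ ω ∂μ, β ≤ (μ[(T k).indicator (fun _ => (1 : ℝ)) | 𝔉 (k - 1)]) ω) :
    μ {ω | Filter.atTop.limsup
        (fun j => ((∑ k ∈ Finset.range (j + 1),
          ((T k).indicator (fun _ => (1 : ℝ)) ω - β) : ℝ) : EReal)) = ⊤} = 1 :=
  random_walk_limsup_top_general μ 𝔉 β hβ T hTmeas hcond
end

section
/- Let (Ω, 𝔉, ℙ) be a probability space with a filtration (𝔉_k)_{k≥0}, let β ∈ (0,1) and θ_min > 0. Let (T_k)_{k≥0} be events with T_k ∈ 𝔉_k and ℙ(T_k | 𝔉_{k−1}) ≥ β almost surely for all k ≥ 1 (and ℙ(T_0) ≥ β), and let (Θ_k)_{k≥0} be real random variables with Θ_k ≥ θ_min, where Θ_k is 𝔉_{k−1}-measurable for k ≥ 1 and Θ_0 is constant. If Σ_{k≥0} 1_{T_k}/Θ_k < +∞ almost surely, then Σ_{k≥0} (1 − 1_{T_k})/Θ_k < +∞ almost surely; in particular Σ_{k≥0} 1/Θ_k < +∞ almost surely.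 -/
/-!
Write `Y k = 1_{T (k+1)} / Θ (k+1)`. Since `Θ (k+1)` is known at time `k`, it can be pulled out of
the conditional expectation, so `𝔼[Y k | 𝔉 k] ≥ β / Θ (k+1)`. The partial sums of the bounded,
nonnegative `Y k` and those of their conditional expectations diverge together almost surely
(Lévy's extension of Borel–Cantelli, `MeasureTheory.tendsto_sum_indicator_atTop_iff`), so
`∑ Y k < ∞` gives `∑ β / Θ (k+1) < ∞`, and `0 ≤ 1 - 1_{T k} ≤ 1` does the rest.
-/

open Filter MeasureTheory

namespace MeasureTheory

variable {Ω : Type*} {mΩ : MeasurableSpace Ω} {μ : Measure Ω} [IsFiniteMeasure μ]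
  {𝔉 : Filtration ℕ mΩ}

theorem ae_summable_condExp_of_summable {Y : ℕ → Ω → ℝ} {C : ℝ}
    (hY : ∀ k, StronglyMeasurable[𝔉 (k + 1)] (Y k)) (hY0 : ∀ k ω, 0 ≤ Y k ω)
    (hYC : ∀ k ω, Y k ω ≤ C) :
    ∀ᵐ ω ∂μ, Summable (fun k => Y k ω) → Summable (fun k => (μ[Y k | 𝔉 k]) ω) := by
  set f : ℕ → Ω → ℝ := fun n => ∑ k ∈ Finset.range n, Y k with hf
  have hf_succ_sub (n : ℕ) : f (n + 1) - f n = Y n := Finset.sum_range_succ_sub_sum Y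
  have hpred (n : ℕ) (ω : Ω) :
      predictablePart f 𝔉 μ n ω = ∑ k ∈ Finset.range n, (μ[Y k | 𝔉 k]) ω := by
    simp only [predictablePart, Finset.sum_apply, hf_succ_sub]
  have hadapted : StronglyAdapted 𝔉 f := fun n =>
    Finset.stronglyMeasurable_sum _ fun k hk =>
      (hY k).mono (𝔉.mono (Finset.mem_range.1 hk))
  have hint (n : ℕ) : Integrable (f n) μ :=
    integrable_finsetSum' _ fun k _ =>
      Integrable.of_bound ((hY k).mono (𝔉.le _)).aestronglyMeasurable C
        (Eventually.of_forall fun ω => by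
          rw [Real.norm_eq_abs, abs_of_nonneg (hY0 k ω)]; exact hYC k ω)
  have hmono : ∀ᵐ ω ∂μ, ∀ n, f n ω ≤ f (n + 1) ω := Eventually.of_forall fun ω n => by
    rw [← sub_nonneg, ← Pi.sub_apply, hf_succ_sub]; exact hY0 n ω
  have hbdd : ∀ᵐ ω ∂μ, ∀ n, |f (n + 1) ω - f n ω| ≤ C.toNNReal :=
    Eventually.of_forall fun ω n => by
      rw [← Pi.sub_apply, hf_succ_sub, abs_of_nonneg (hY0 n ω)]
      exact (hYC n ω).trans (Real.le_coe_toNNReal C)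
  have hcondExp_nonneg : ∀ᵐ ω ∂μ, ∀ k, 0 ≤ (μ[Y k | 𝔉 k]) ω :=
    ae_all_iff.2 fun k => condExp_nonneg (Eventually.of_forall (hY0 k))
  filter_upwards [tendsto_sum_indicator_atTop_iff hmono hadapted hint hbdd, hcondExp_nonneg]
    with ω hiff hnonneg hsum
  rw [summable_iff_not_tendsto_nat_atTop_of_nonneg hnonneg]
  rw [summable_iff_not_tendsto_nat_atTop_of_nonneg (hY0 · ω)] at hsum
  simp only [← hpred, ← hiff]
  simpa [hf, Finset.sum_apply] using hsum

theorem condExp_div_of_measurable_of_le {m : MeasurableSpace Ω} (hm : m ≤ mΩ) {g Θ : Ω → ℝ}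
    (hg : Integrable g μ) (hΘ : Measurable[m] Θ) {θmin : ℝ} (hθmin : 0 < θmin)
    (hΘmin : ∀ ω, θmin ≤ Θ ω) :
    μ[fun ω => g ω / Θ ω | m] =ᵐ[μ] fun ω => (μ[g | m]) ω / Θ ω := by
  have hbound : ∀ᵐ ω ∂μ, ‖(Θ ω)⁻¹‖ ≤ θmin⁻¹ := Eventually.of_forall fun ω => by
    rw [norm_inv, Real.norm_of_nonneg (hθmin.trans_le (hΘmin ω)).le]
    exact inv_anti₀ hθmin (hΘmin ω)
  have h := condExp_stronglyMeasurable_mul_of_bound hm hΘ.inv.stronglyMeasurable hg _ hbound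
  simp only [div_eq_inv_mul]
  exact h

theorem ae_summable_inv_of_summable_indicator_div {S : ℕ → Set Ω} {W : ℕ → Ω → ℝ}
    {β θmin : ℝ} (hβ : 0 < β) (hθmin : 0 < θmin) (hS : ∀ k, MeasurableSet[𝔉 (k + 1)] (S k))
    (hcond : ∀ k, ∀ᵐ ω ∂μ, β ≤ (μ[(S k).indicator (fun _ => (1 : ℝ)) | 𝔉 k]) ω)
    (hW : ∀ k, Measurable[𝔉 k] (W k)) (hWmin : ∀ k ω, θmin ≤ W k ω) :
    ∀ᵐ ω ∂μ, Summable (fun k => (S k).indicator (fun _ => (1 : ℝ)) ω / W k ω) →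
      Summable (fun k => 1 / W k ω) := by
  have hWpos (k : ℕ) (ω : Ω) : 0 < W k ω := hθmin.trans_le (hWmin k ω)
  set Y : ℕ → Ω → ℝ := fun k ω => (S k).indicator (fun _ => (1 : ℝ)) ω / W k ω
  have hY (k : ℕ) : StronglyMeasurable[𝔉 (k + 1)] (Y k) :=
    ((measurable_const.indicator (hS k)).div
      ((hW k).mono (𝔉.mono k.le_succ) le_rfl)).stronglyMeasurable
  have hY0 (k : ℕ) (ω : Ω) : 0 ≤ Y k ω :=
    div_nonneg (Set.indicator_nonneg (fun _ _ => zero_le_one) ω) (hWpos k ω).le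
  have hYC (k : ℕ) (ω : Ω) : Y k ω ≤ 1 / θmin :=
    div_le_div₀ zero_le_one (Set.indicator_le_self' (fun _ _ => zero_le_one) ω) hθmin
      (hWmin k ω)
  have hlb : ∀ᵐ ω ∂μ, ∀ k, β / W k ω ≤ (μ[Y k | 𝔉 k]) ω := by
    refine ae_all_iff.2 fun k => ?_
    have hind : Integrable ((S k).indicator fun _ => (1 : ℝ)) μ :=
      (integrable_const 1).indicator (𝔉.le _ _ (hS k))
    filter_upwards [hcond k,
      condExp_div_of_measurable_of_le (𝔉.le k) hind (hW k) hθmin (hWmin k)] with ω hβω hYω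
    rw [hYω]
    exact div_le_div_of_nonneg_right hβω (hWpos k ω).le
  filter_upwards [ae_summable_condExp_of_summable hY hY0 hYC, hlb] with ω hcondExp hlbω hsum
  refine (summable_mul_left_iff hβ.ne').1 ?_
  simpa only [mul_one_div] using
    (hcondExp hsum).of_nonneg_of_le (fun k => (div_pos hβ (hWpos k ω)).le) hlbω

end MeasureTheory

theorem summable_off_event_general {Ω : Type*} {mΩ : MeasurableSpace Ω}
    (μ : Measure Ω) [IsProbabilityMeasure μ]
    (𝔉 : Filtration ℕ mΩ) (β : ℝ) (hβ : β ∈ Set.Ioo (0 : ℝ) 1)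
    (θmin : ℝ) (hθmin : 0 < θmin)
    (T : ℕ → Set Ω) (hTmeas : ∀ k, MeasurableSet[𝔉 k] (T k))
    (hcond : ∀ k, 1 ≤ k →
      ∀ᵐ ω ∂μ, β ≤ (μ[(T k).indicator (fun _ => (1 : ℝ)) | 𝔉 (k - 1)]) ω)
    (Θ : ℕ → Ω → ℝ) (hΘmin : ∀ k ω, θmin ≤ Θ k ω)
    (hΘmeas : ∀ k, 1 ≤ k → Measurable[𝔉 (k - 1)] (Θ k))
    (hsum : ∀ᵐ ω ∂μ,
      Summable (fun k => (T k).indicator (fun _ => (1 : ℝ)) ω / Θ k ω)) :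
    ∀ᵐ ω ∂μ,
      Summable (fun k => (1 - (T k).indicator (fun _ => (1 : ℝ)) ω) / Θ k ω) ∧
        Summable (fun k => 1 / Θ k ω) := by
  have hcond' (k : ℕ) :
      ∀ᵐ ω ∂μ, β ≤ (μ[(T (k + 1)).indicator (fun _ => (1 : ℝ)) | 𝔉 k]) ω := by
    simpa using hcond (k + 1) k.succ_pos
  filter_upwards [hsum, ae_summable_inv_of_summable_indicator_div hβ.1 hθmin
    (fun k => hTmeas (k + 1)) hcond' (fun k => hΘmeas (k + 1) k.succ_pos)
    (fun k => hΘmin (k + 1))] with ω hsumω hshift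
  have hinv : Summable fun k => 1 / Θ k ω :=
    (summable_nat_add_iff 1).1 (hshift ((summable_nat_add_iff 1).2 hsumω))
  have hΘpos (k : ℕ) : 0 < Θ k ω := hθmin.trans_le (hΘmin k ω)
  refine ⟨hinv.of_nonneg_of_le (fun k => ?_) (fun k => ?_), hinv⟩
  · exact div_nonneg (sub_nonneg.2 (Set.indicator_le_self' (fun _ _ => zero_le_one) ω))
      (hΘpos k).le
  · exact div_le_div_of_nonneg_right
      (sub_le_self _ (Set.indicator_nonneg (fun _ _ => zero_le_one) ω)) (hΘpos k).le

/-- If the events `T k` have conditional probability at least `β` given the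
past and the `𝔉_{k−1}`-measurable random variables `Θ k` are bounded below by
`θmin > 0`, then almost-sure finiteness of `∑ 1_{T k}/Θ k` implies
almost-sure finiteness of `∑ (1 − 1_{T k})/Θ k`, hence of `∑ 1/Θ k`. -/
theorem summable_off_event {Ω : Type*} {mΩ : MeasurableSpace Ω}
    (μ : Measure Ω) [IsProbabilityMeasure μ]
    (𝔉 : Filtration ℕ mΩ) (β : ℝ) (hβ : β ∈ Set.Ioo (0 : ℝ) 1)
    (θmin : ℝ) (hθmin : 0 < θmin)
    (T : ℕ → Set Ω) (hTmeas : ∀ k, MeasurableSet[𝔉 k] (T k))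
    (hT0 : ENNReal.ofReal β ≤ μ (T 0))
    (hcond : ∀ k, 1 ≤ k →
      ∀ᵐ ω ∂μ, β ≤ (μ[(T k).indicator (fun _ => (1 : ℝ)) | 𝔉 (k - 1)]) ω)
    (Θ : ℕ → Ω → ℝ) (hΘmin : ∀ k ω, θmin ≤ Θ k ω)
    (hΘmeas : ∀ k, 1 ≤ k → Measurable[𝔉 (k - 1)] (Θ k))
    (hΘ0 : ∀ ω ω', Θ 0 ω = Θ 0 ω')
    (hsum : ∀ᵐ ω ∂μ,
      Summable (fun k => (T k).indicator (fun _ => (1 : ℝ)) ω / Θ k ω)) :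
    ∀ᵐ ω ∂μ,
      Summable (fun k => (1 - (T k).indicator (fun _ => (1 : ℝ)) ω) / Θ k ω) ∧
        Summable (fun k => 1 / Θ k ω) :=
  summable_off_event_general μ 𝔉 β hβ θmin hθmin T hTmeas hcond Θ hΘmin hΘmeas hsum
end

section
/- Let g : ℝⁿ → ℝⁿ be Lipschitz continuous with constant L > 0. Let (x_k) be a sequence in ℝⁿ and (t_k) a sequence of nonnegative reals such that ‖x_{k+1} − x_k‖ ≤ t_k for all k, t_k → 0 as k → ∞, liminf_{k→∞} ‖g(x_k)‖ = 0, and for every ε > 0 the sum Σ_{k : ‖g(x_k)‖ > ε} t_k is finite. Then lim_{k→∞} ‖g(x_k)‖ = 0. -/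
open Filter

/-- If `g` is Lipschitz, the steps `‖x_{k+1} − x_k‖ ≤ t_k` with `t_k → 0`,
`liminf ‖g(x_k)‖ = 0`, and for every `ε > 0` the sum of `t_k` over
`{k : ‖g(x_k)‖ > ε}` is finite, then `‖g(x_k)‖ → 0`. -/
theorem liminf_to_lim {n : ℕ}
    (g : EuclideanSpace ℝ (Fin n) → EuclideanSpace ℝ (Fin n))
    (L : ℝ) (hL : 0 < L)
    (hg : ∀ x y, ‖g x - g y‖ ≤ L * ‖x - y‖)
    (x : ℕ → EuclideanSpace ℝ (Fin n)) (t : ℕ → ℝ)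
    (ht0 : ∀ k, 0 ≤ t k)
    (hstep : ∀ k, ‖x (k + 1) - x k‖ ≤ t k)
    (htlim : Tendsto t atTop (nhds 0))
    (hliminf : Filter.atTop.liminf (fun k => ‖g (x k)‖) = 0)
    (hsum : ∀ ε : ℝ, 0 < ε →
      Summable (Set.indicator {k | ε < ‖g (x k)‖} t)) :
    Tendsto (fun k => ‖g (x k)‖) atTop (nhds 0) := by
  rw [Metric.tendsto_atTop]
  intro ε hε
  set a := ε / 3 with ha
  have ha0 : 0 < a := by positivity
  set f := Set.indicator {k | a < ‖g (x k)‖} t with hf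
  have hf0 : ∀ j, 0 ≤ f j := fun j => Set.indicator_nonneg (fun j _ => ht0 j) j
  have hsa : Summable f := hsum a ha0
  have hc : CauchySeq (fun m => ∑ j ∈ Finset.range m, f j) :=
    hsa.hasSum.tendsto_sum_nat.cauchySeq
  have haL : 0 < a / L := by positivity
  obtain ⟨N, hN⟩ := Metric.cauchySeq_iff'.mp hc (a / L) haL
  -- frequently small
  have hfreq : ∃ᶠ j in atTop, ‖g (x j)‖ < 2 * a := by
    by_contra hcon
    rw [Filter.not_frequently] at hcon
    simp only [not_lt] at hcon
    rw [Filter.eventually_atTop] at hcon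
    obtain ⟨N0, hN0⟩ := hcon
    -- t is summable
    have hts : Summable t := by
      rw [← summable_nat_add_iff N0]
      refine ((summable_nat_add_iff N0).mpr hsa).congr fun j => ?_
      exact Set.indicator_of_mem
        (show j + N0 ∈ {k | a < ‖g (x k)‖} by
          have := hN0 (j + N0) (Nat.le_add_left _ _); simp only [Set.mem_setOf_eq]; linarith) t
    have hcauchy : CauchySeq x := by
      apply cauchySeq_of_summable_dist
      refine Summable.of_nonneg_of_le (fun k => dist_nonneg) (fun k => ?_) hts
      rw [dist_eq_norm, norm_sub_rev]
      exact hstep k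
    obtain ⟨y, hy⟩ := cauchySeq_tendsto_of_complete hcauchy
    have hgy : Tendsto (fun k => ‖g (x k)‖) atTop (nhds ‖g y‖) := by
      have h1 : Tendsto (fun k => ‖g (x k) - g y‖) atTop (nhds 0) := by
        have h2 : Tendsto (fun k => L * ‖x k - y‖) atTop (nhds (L * 0)) := by
          apply Tendsto.const_mul
          exact (tendsto_iff_norm_sub_tendsto_zero.mp hy)
        rw [mul_zero] at h2
        exact squeeze_zero (fun k => norm_nonneg _) (fun k => hg _ _) h2
      exact (tendsto_iff_norm_sub_tendsto_zero.mpr h1).norm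
    have hlim0 : ‖g y‖ = 0 := by
      have := hgy.liminf_eq
      rw [hliminf] at this
      exact this.symm
    have : 2 * a ≤ ‖g y‖ := ge_of_tendsto hgy (Filter.eventually_atTop.mpr ⟨N0, hN0⟩)
    rw [hlim0] at this
    linarith
  refine ⟨N, fun k hk => ?_⟩
  rw [Real.dist_eq, sub_zero, abs_of_nonneg (norm_nonneg _)]
  by_cases h2 : ‖g (x k)‖ < 2 * a
  · linarith
  push_neg at h2
  have hex : ∃ m, k < m ∧ ‖g (x m)‖ < 2 * a := by
    obtain ⟨m, hm1, hm2⟩ := (frequently_atTop.mp hfreq) (k + 1)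
    exact ⟨m, by omega, hm2⟩
  classical
  set m := Nat.find hex with hm
  obtain ⟨hkm, hgm⟩ := Nat.find_spec hex
  have hmem : ∀ j ∈ Finset.Ico k m, a < ‖g (x j)‖ := by
    intro j hj
    rw [Finset.mem_Ico] at hj
    rcases eq_or_lt_of_le hj.1 with h | h
    · subst h; linarith
    · have := Nat.find_min hex hj.2
      push_neg at this
      have := this h
      linarith
  -- sum of t over Ico k m is bounded
  have hsum1 : ∑ j ∈ Finset.Ico k m, t j = ∑ j ∈ Finset.Ico k m, f j := by
    apply Finset.sum_congr rfl
    intro j hj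
    exact (Set.indicator_of_mem (show j ∈ {k | a < ‖g (x k)‖} from hmem j hj) t).symm
  have hsum2 : ∑ j ∈ Finset.Ico k m, f j ≤ ∑ j ∈ Finset.Ico N m, f j :=
    Finset.sum_le_sum_of_subset_of_nonneg
      (Finset.Ico_subset_Ico hk le_rfl) (fun j _ _ => hf0 j)
  have hNm : N ≤ m := le_trans hk (le_of_lt hkm)
  have hsum3 : ∑ j ∈ Finset.Ico N m, f j < a / L := by
    have h := hN m hNm
    rw [Real.dist_eq] at h
    have heq : ∑ j ∈ Finset.Ico N m, f j =
        (∑ j ∈ Finset.range m, f j) - ∑ j ∈ Finset.range N, f j := by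
      rw [Finset.sum_Ico_eq_sub _ hNm]
    calc ∑ j ∈ Finset.Ico N m, f j
        ≤ |(∑ j ∈ Finset.range m, f j) - ∑ j ∈ Finset.range N, f j| := by
          rw [← heq]; exact le_abs_self _
      _ < a / L := h
  have hdist : ‖x k - x m‖ ≤ ∑ j ∈ Finset.Ico k m, t j := by
    have := dist_le_Ico_sum_dist x (le_of_lt hkm)
    rw [dist_eq_norm] at this
    refine this.trans (Finset.sum_le_sum fun j _ => ?_)
    rw [dist_eq_norm, norm_sub_rev]
    exact hstep j
  have key : ‖g (x k)‖ ≤ ‖g (x k) - g (x m)‖ + ‖g (x m)‖ := by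
    have := norm_sub_norm_le (g (x k)) (g (x m))
    linarith [norm_nonneg (g (x m))]
  have hlip : ‖g (x k) - g (x m)‖ ≤ L * ‖x k - x m‖ := hg _ _
  have : L * ‖x k - x m‖ < a := by
    calc L * ‖x k - x m‖ ≤ L * ∑ j ∈ Finset.Ico k m, t j :=
          mul_le_mul_of_nonneg_left hdist (le_of_lt hL)
      _ < L * (a / L) := by
          apply mul_lt_mul_of_pos_left _ hL
          rw [hsum1]; linarith
      _ = a := by field_simp
  linarith
end
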